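/- arXiv:2407.15517 — 10 statements merged into one kernel-verified Lean document; each statement's English description precedes it below -/
import Mathlib

section
/- There exists an increasing function C₀ : (0,π) → (0,∞), independent of α, with the following property. Let θ ∈ (0,π) and α ∈ ℝ with α ≠ 0. Let u_r, u_φ : (0,∞) × [0,θ] → ℝ be smooth functions for which there exist 0 < r₀ < r₁ < ∞ such that u_r(r,φ) = u_φ(r,φ) = 0 whenever r ∉ [r₀,r₁], and suppose that (r∂_r u_r)(r,φ) + u_r(r,φ) + ∂_φ u_φ(r,φ) = 0 for all r > 0 and φ ∈ (0,θ), and that u_φ(r,0) = u_φ(r,θ) = 0 for all r > 0. Then ∫₀^θ ∫₀^∞ r^{−2α−2} (u_r² + u_φ²) r dr dφ ≤ C₀(θ)·θ² · ∫₀^θ ∫₀^∞ r^{−2α−2} [ (r∂_r u_r)² + (∂_φ u_r − u_φ)² + (r∂_r u_φ)² + (∂_φ u_φ + u_r)² ] r dr dφ. -/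
open MeasureTheory Set Real intervalIntegral

lemma young_sq (ε p q : ℝ) (hε : 0 < ε) : (p + q)^2 ≤ (1+ε)*p^2 + (1+1/ε)*q^2 := by
  have h2 : 0 ≤ (ε*p - q)^2 / ε := div_nonneg (sq_nonneg _) hε.le
  have h3 : (1+ε)*p^2 + (1+1/ε)*q^2 - (p+q)^2 = (ε*p - q)^2 / ε := by
    field_simp; ring
  linarith [h3 ▸ h2]

set_option maxHeartbeats 1000000 in
/-- Sharp Dirichlet Poincaré inequality on `[0, L]`. -/
lemma poincare_dirichlet {L : ℝ} (hL : 0 < L) {f f' : ℝ → ℝ}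
    (hd : ∀ x, HasDerivAt f (f' x) x) (hc : Continuous f')
    (h0 : f 0 = 0) (hLv : f L = 0) :
    ∫ x in (0:ℝ)..L, (f x)^2 ≤ (L/π)^2 * ∫ x in (0:ℝ)..L, (f' x)^2 := by
  have hfc : Continuous f := continuous_iff_continuousAt.2 fun x => (hd x).continuousAt
  set l : ℝ := π / L with hl_def
  have hπ : (0:ℝ) < π := Real.pi_pos
  have hl : 0 < l := div_pos hπ hL
  have hlL : l * L = π := by rw [hl_def, div_mul_cancel₀ _ hL.ne']
  -- bounds on f' and f^2 on [0, L]
  clear_value l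
  obtain ⟨M0, hM0⟩ := isCompact_Icc.exists_bound_of_continuousOn (f := f') hc.continuousOn
  set M := max M0 0 with hM_def
  have hM : ∀ x ∈ Icc (0:ℝ) L, |f' x| ≤ M := fun x hx => (hM0 x hx).trans (le_max_left _ _)
  have hMnn : 0 ≤ M := le_max_right _ _
  obtain ⟨K0, hK0⟩ := isCompact_Icc.exists_bound_of_continuousOn
    (f := fun x => (f x)^2) (by fun_prop)
  set K := max K0 0 with hK_def
  have hK : ∀ x ∈ Icc (0:ℝ) L, (f x)^2 ≤ K := by
    intro x hx
    have := hK0 x hx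
    rw [Real.norm_eq_abs, abs_of_nonneg (sq_nonneg _)] at this
    exact this.trans (le_max_left _ _)
  have hKnn : 0 ≤ K := le_max_right _ _
  set S := ∫ x in (0:ℝ)..L, (f x)^2 with hS_def
  set B := ∫ x in (0:ℝ)..L, (f' x)^2 with hB_def
  clear_value M K S B
  have hint_f2 : ∀ a b : ℝ, IntervalIntegrable (fun x => (f x)^2) volume a b :=
    fun a b => (by fun_prop : Continuous fun x => (f x)^2).intervalIntegrable a b
  have hint_f'2 : ∀ a b : ℝ, IntervalIntegrable (fun x => (f' x)^2) volume a b :=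
    fun a b => (by fun_prop : Continuous fun x => (f' x)^2).intervalIntegrable a b
  -- key inequality for each small δ
  have key : ∀ δ : ℝ, 0 < δ → δ < L/2 →
      l^2 * S ≤ B + (2*M^2 + l^2*(2*K)) * δ := by
    intro δ hδ0 hδL
    set a := δ
    set b := L - δ with hb_def
    have hab : a ≤ b := by simp only [hb_def]; linarith
    have haL : a ≤ L := by linarith
    have h0b : (0:ℝ) ≤ b := by simp only [hb_def]; linarith
    set c : ℝ → ℝ := fun x => Real.cos (l*x) / Real.sin (l*x) with hc_def
    set c' : ℝ → ℝ := fun x => -l / (Real.sin (l*x))^2 with hc'_def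
    have hsin : ∀ x ∈ Icc a b, 0 < Real.sin (l*x) := by
      intro x hx
      apply Real.sin_pos_of_pos_of_lt_pi
      · exact mul_pos hl (lt_of_lt_of_le hδ0 hx.1)
      · calc l * x ≤ l * (L - δ) := by
              exact mul_le_mul_of_nonneg_left hx.2 hl.le
          _ = π - l * δ := by rw [mul_sub, hlL]
          _ < π := by nlinarith
    have hIcc : uIcc a b = Icc a b := uIcc_of_le hab
    have hcd : ∀ x ∈ Icc a b, HasDerivAt c (c' x) x := by
      intro x hx
      have hsx := hsin x hx
      have hlin : HasDerivAt (fun y : ℝ => l * y) l x := by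
        simpa using (hasDerivAt_id x).const_mul l
      have hcos : HasDerivAt (fun y => Real.cos (l*y)) (-Real.sin (l*x) * l) x :=
        (Real.hasDerivAt_cos (l*x)).comp x hlin
      have hsin' : HasDerivAt (fun y => Real.sin (l*y)) (Real.cos (l*x) * l) x :=
        (Real.hasDerivAt_sin (l*x)).comp x hlin
      have := hcos.div hsin' hsx.ne'
      refine this.congr_deriv (Eq.symm ?_)
      have hs2 : (Real.sin (l*x))^2 ≠ 0 := pow_ne_zero _ hsx.ne'
      show (-l) / (Real.sin (l*x))^2 = _
      rw [div_eq_div_iff (pow_ne_zero _ hsx.ne') (pow_ne_zero _ hsx.ne')]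
      linear_combination (l * Real.sin (l*x)^2) * Real.sin_sq_add_cos_sq (l*x)
    have hccont : ContinuousOn c (Icc a b) := by
      apply ContinuousOn.div
      · fun_prop
      · fun_prop
      · intro x hx; exact (hsin x hx).ne'
    have hc'cont : ContinuousOn c' (Icc a b) := by
      apply ContinuousOn.div
      · fun_prop
      · fun_prop
      · intro x hx; exact pow_ne_zero _ (hsin x hx).ne'
    clear_value c c'
    -- integration by parts
    have hf2d : ∀ x ∈ uIcc a b, HasDerivAt (fun y => (f y)^2) (2*f x*f' x) x := by
      intro x _
      have h := (hd x).mul (hd x)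
      have h2 : (fun y => f y * f y) = fun y => (f y)^2 := by funext y; ring
      change HasDerivAt (fun y => f y * f y) _ x at h; rw [h2] at h
      convert h using 1; ring
    have hibp := intervalIntegral.integral_mul_deriv_eq_deriv_mul
      (u := c) (u' := c') (v := fun x => (f x)^2) (v' := fun x => 2*f x*f' x)
      (fun x hx => hcd x (hIcc ▸ hx)) hf2d
      ((hIcc ▸ hc'cont).intervalIntegrable)
      ((by fun_prop : Continuous fun x => 2*f x*f' x).intervalIntegrable a b)
    -- integrability of the various pieces on [a,b]
    have hi1 : IntervalIntegrable (fun x => c x * (2*f x*f' x)) volume a b :=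
      ((hIcc ▸ hccont).mul (by fun_prop : Continuous fun x => 2*f x*f' x).continuousOn).intervalIntegrable
    have hi2 : IntervalIntegrable (fun x => c' x * (f x)^2) volume a b :=
      ((hIcc ▸ hc'cont).mul (by fun_prop : Continuous fun x => (f x)^2).continuousOn).intervalIntegrable
    have hi3 : IntervalIntegrable (fun x => l^2*(c x)^2*(f x)^2) volume a b := by
      apply ContinuousOn.intervalIntegrable
      exact (((hIcc ▸ hccont).pow 2).const_smul (l^2)).mul (by fun_prop : Continuous fun x => (f x)^2).continuousOn
    -- expansion of the square
    have I1 : ∫ x in a..b, (f' x - l*c x*f x)^2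
        = ((∫ x in a..b, (f' x)^2) - l*(∫ x in a..b, c x * (2*f x*f' x)))
          + ∫ x in a..b, l^2*(c x)^2*(f x)^2 := by
      rw [← intervalIntegral.integral_const_mul, ← intervalIntegral.integral_sub (hint_f'2 a b)
        (hi1.const_mul l), ← intervalIntegral.integral_add (((hint_f'2 a b)).sub (hi1.const_mul l)) hi3]
      apply intervalIntegral.integral_congr
      intro x _
      ring
    -- rewrite the quadratic term
    have I3 : ∫ x in a..b, l^2*(c x)^2*(f x)^2
        = -(l*(∫ x in a..b, c' x * (f x)^2)) - l^2 * ∫ x in a..b, (f x)^2 := by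
      have hz : ∫ x in a..b, (l^2*(c x)^2*(f x)^2 + (l*(c' x * (f x)^2) + l^2*(f x)^2)) = 0 := by
        rw [intervalIntegral.integral_congr (g := fun _ => (0:ℝ)) ?_, intervalIntegral.integral_zero]
        intro x hx
        have hsx := hsin x (hIcc ▸ hx)
        have h1 : Real.sin (l*x) ≠ 0 := hsx.ne'
        simp only [hc_def, hc'_def]
        field_simp
        linear_combination (l^2 * f x^2) * Real.sin_sq_add_cos_sq (l*x)
      have hsplit : ∫ x in a..b, (l^2*(c x)^2*(f x)^2 + (l*(c' x * (f x)^2) + l^2*(f x)^2))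
          = (∫ x in a..b, l^2*(c x)^2*(f x)^2)
            + ((l*(∫ x in a..b, c' x * (f x)^2)) + l^2 * ∫ x in a..b, (f x)^2) := by
        rw [intervalIntegral.integral_add hi3 ((hi2.const_mul l).add ((hint_f2 a b).const_mul (l^2))),
          intervalIntegral.integral_add (hi2.const_mul l) ((hint_f2 a b).const_mul (l^2)),
          intervalIntegral.integral_const_mul, intervalIntegral.integral_const_mul]
      linarith [hz, hsplit ▸ hz]
    have hnn : 0 ≤ ∫ x in a..b, (f' x - l*c x*f x)^2 :=
      intervalIntegral.integral_nonneg hab (fun x _ => sq_nonneg _)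
    -- boundary estimates
    have hfa : (f a)^2 ≤ M^2*δ^2 := by
      have : f a = ∫ x in (0:ℝ)..a, f' x := by
        rw [intervalIntegral.integral_eq_sub_of_hasDerivAt (fun x _ => hd x)
          (hc.intervalIntegrable 0 a), h0, sub_zero]
      have hb : |∫ x in (0:ℝ)..a, f' x| ≤ M * |a - 0| := by
        rw [← Real.norm_eq_abs (∫ x in (0:ℝ)..a, f' x)]
        apply intervalIntegral.norm_integral_le_of_norm_le_const
        intro x hx
        rw [uIoc_of_le (by linarith : (0:ℝ) ≤ a)] at hx
        exact hM x ⟨hx.1.le, hx.2.trans haL⟩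
      rw [← this] at hb
      rw [sub_zero, abs_of_pos hδ0] at hb
      calc (f a)^2 = |f a|^2 := (sq_abs _).symm
        _ ≤ (M*δ)^2 := by
            apply pow_le_pow_left₀ (abs_nonneg _) hb
        _ = M^2*δ^2 := by ring
    have hfb : (f b)^2 ≤ M^2*δ^2 := by
      have : f b = -∫ x in b..L, f' x := by
        rw [intervalIntegral.integral_eq_sub_of_hasDerivAt (fun x _ => hd x)
          (hc.intervalIntegrable b L), hLv]
        ring
      have hb2 : |∫ x in b..L, f' x| ≤ M * |L - b| := by
        rw [← Real.norm_eq_abs (∫ x in b..L, f' x)]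
        apply intervalIntegral.norm_integral_le_of_norm_le_const
        intro x hx
        rw [uIoc_of_le (by simp only [hb_def]; linarith : b ≤ L)] at hx
        exact hM x ⟨h0b.trans hx.1.le, hx.2⟩
      have hLb : |L - b| = δ := by simp only [hb_def, sub_sub_cancel]; exact abs_of_pos hδ0
      rw [hLb] at hb2
      calc (f b)^2 = |∫ x in b..L, f' x|^2 := by rw [this]; rw [← sq_abs]; rw [abs_neg]
        _ ≤ (M*δ)^2 := by apply pow_le_pow_left₀ (abs_nonneg _) hb2
        _ = M^2*δ^2 := by ring
    -- cotangent bound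
    have hlδ : 0 < l * δ := mul_pos hl hδ0
    have hlδ2 : l * δ < π/2 := by
      have : l * δ < l * (L/2) := mul_lt_mul_of_pos_left hδL hl
      calc l * δ < l * (L/2) := this
        _ = π/2 := by rw [← mul_div_assoc, hlL]
    have hsa : 0 < Real.sin (l*a) := hsin a ⟨le_refl _, hab⟩
    have hca_pos : 0 < Real.cos (l*a) :=
      Real.cos_pos_of_mem_Ioo ⟨by linarith [Real.pi_pos], hlδ2⟩
    have hcot : c a ≤ 1/(l*δ) := by
      have htan := Real.lt_tan hlδ hlδ2
      rw [Real.tan_eq_sin_div_cos] at htan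
      have h1 : l*δ * Real.cos (l*δ) < Real.sin (l*δ) := by
        rw [lt_div_iff₀ hca_pos] at htan
        linarith [htan]
      rw [hc_def]
      rw [div_le_div_iff₀ hsa hlδ]
      nlinarith
    have hcb : c b = - c a := by
      have : l * b = π - l * a := by simp only [hb_def]; rw [mul_sub, hlL]
      simp only [hc_def, this, Real.cos_pi_sub, Real.sin_pi_sub]
      ring
    -- main inequality on [a,b]
    have main : l^2 * ∫ x in a..b, (f x)^2 ≤ (∫ x in a..b, (f' x)^2) + 2*M^2*δ := by
      have hboundary : l * (c b * (f b)^2 - c a * (f a)^2) ≥ -(2*M^2*δ) := by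
        rw [hcb]
        have h1 : c a * ((f a)^2 + (f b)^2) ≤ (1/(l*δ)) * (2*M^2*δ^2) := by
          rcases le_or_gt (c a) 0 with h | h
          · have : c a * ((f a)^2 + (f b)^2) ≤ 0 :=
              mul_nonpos_of_nonpos_of_nonneg h (by positivity)
            have : (0:ℝ) ≤ (1/(l*δ)) * (2*M^2*δ^2) := by positivity
            linarith
          · calc c a * ((f a)^2 + (f b)^2) ≤ (1/(l*δ)) * ((f a)^2 + (f b)^2) :=
                mul_le_mul_of_nonneg_right hcot (by positivity)
              _ ≤ (1/(l*δ)) * (2*M^2*δ^2) := by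
                  apply mul_le_mul_of_nonneg_left _ (by positivity)
                  linarith
        have h2 : (1/(l*δ)) * (2*M^2*δ^2) * l = 2*M^2*δ := by field_simp
        nlinarith [h1, hl, hδ0]
      have hQ : l * (∫ x in a..b, c x * (2*f x*f' x))
          = l*(c b*(f b)^2 - c a*(f a)^2) - l*(∫ x in a..b, c' x * (f x)^2) := by
        rw [hibp]; ring
      nlinarith [hnn, I1, I3, hQ, hboundary]
    -- extend to [0, L]
    have hext1 : ∫ x in a..b, (f' x)^2 ≤ B := by
      rw [hB_def]
      apply intervalIntegral.integral_mono_interval (by linarith : (0:ℝ) ≤ a) hab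
        (by simp only [hb_def]; linarith : b ≤ L)
        (Filter.Eventually.of_forall (fun x => sq_nonneg _)) (hint_f'2 0 L)
    have hext2 : S - 2*K*δ ≤ ∫ x in a..b, (f x)^2 := by
      have e1 : S = (∫ x in (0:ℝ)..a, (f x)^2) + (∫ x in a..b, (f x)^2)
          + ∫ x in b..L, (f x)^2 := by
        rw [hS_def, ← intervalIntegral.integral_add_adjacent_intervals
            ((hint_f2 0 a).trans (hint_f2 a b)) (hint_f2 b L),
          ← intervalIntegral.integral_add_adjacent_intervals (hint_f2 0 a) (hint_f2 a b)]
      have e2 : ∫ x in (0:ℝ)..a, (f x)^2 ≤ K*δ := by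
        have : ∫ x in (0:ℝ)..a, (f x)^2 ≤ ∫ x in (0:ℝ)..a, K :=
          intervalIntegral.integral_mono_on (by linarith) (hint_f2 0 a)
            (intervalIntegrable_const) (fun x hx => hK x ⟨hx.1, hx.2.trans haL⟩)
        simpa [mul_comm] using this
      have e3 : ∫ x in b..L, (f x)^2 ≤ K*δ := by
        have : ∫ x in b..L, (f x)^2 ≤ ∫ x in b..L, K :=
          intervalIntegral.integral_mono_on (by simp only [hb_def]; linarith) (hint_f2 b L)
            (intervalIntegrable_const) (fun x hx => hK x ⟨h0b.trans hx.1, hx.2⟩)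
        rw [intervalIntegral.integral_const, smul_eq_mul] at this
        calc ∫ x in b..L, (f x)^2 ≤ (L - b) * K := this
          _ = K * δ := by simp only [hb_def]; ring
      linarith
    nlinarith [main, hext1, hext2, mul_le_mul_of_nonneg_left hext2 (sq_nonneg l)]
  -- take δ → 0
  have hfinal : l^2 * S ≤ B := by
    apply le_of_forall_pos_le_add
    intro ε hε
    set C := 2*M^2 + l^2*(2*K) with hC_def
    have hCnn : 0 ≤ C := by positivity
    set δ := min (ε/(C+1)) (L/4) with hδ_def
    have hδ0 : 0 < δ := lt_min (by positivity) (by linarith)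
    have hδL : δ < L/2 := (min_le_right _ _).trans_lt (by linarith)
    have h1 := key δ hδ0 hδL
    have h2 : C * δ ≤ ε := by
      have : δ ≤ ε/(C+1) := min_le_left _ _
      calc C * δ ≤ C * (ε/(C+1)) := mul_le_mul_of_nonneg_left this hCnn
        _ ≤ ε := by
            rw [← mul_div_assoc, div_le_iff₀ (by linarith : (0:ℝ) < C+1)]
            nlinarith
    linarith
  have hl2 : (L/π)^2 = 1/l^2 := by rw [hl_def]; field_simp
  rw [hl2, one_div, inv_mul_eq_div, le_div_iff₀ (by positivity : (0:ℝ) < l^2)]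
  linarith [hfinal]

/-- Sharp Poincaré inequality on `[0, L]` for mean-zero functions. -/
lemma poincare_meanzero {L : ℝ} (hL : 0 < L) {f f' : ℝ → ℝ}
    (hd : ∀ x, HasDerivAt f (f' x) x) (hc : Continuous f')
    (hmean : ∫ x in (0:ℝ)..L, f x = 0) :
    ∫ x in (0:ℝ)..L, (f x)^2 ≤ (L/π)^2 * ∫ x in (0:ℝ)..L, (f' x)^2 := by
  have hfc : Continuous f := continuous_iff_continuousAt.2 fun x => (hd x).continuousAt
  set g : ℝ → ℝ := fun x => ∫ t in (0:ℝ)..x, f t with hg_def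
  have hgd : ∀ x, HasDerivAt g (f x) x := fun x =>
    intervalIntegral.integral_hasDerivAt_right (hfc.intervalIntegrable 0 x)
      (hfc.stronglyMeasurableAtFilter _ _) hfc.continuousAt
  have hgc : Continuous g := continuous_iff_continuousAt.2 fun x => (hgd x).continuousAt
  have hg0 : g 0 = 0 := intervalIntegral.integral_same
  have hgL : g L = 0 := hmean
  set k := (L/π)^2 with hk_def
  have hπ : (0:ℝ) < π := Real.pi_pos
  have hk : 0 < k := by positivity
  set S := ∫ x in (0:ℝ)..L, (f x)^2 with hS_def
  set A := ∫ x in (0:ℝ)..L, (g x)^2 with hA_def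
  set B := ∫ x in (0:ℝ)..L, (f' x)^2 with hB_def
  have hSnn : 0 ≤ S := intervalIntegral.integral_nonneg hL.le (fun x _ => sq_nonneg _)
  have hAnn : 0 ≤ A := intervalIntegral.integral_nonneg hL.le (fun x _ => sq_nonneg _)
  have hBnn : 0 ≤ B := intervalIntegral.integral_nonneg hL.le (fun x _ => sq_nonneg _)
  have hP : A ≤ k * S := by
    have := poincare_dirichlet hL hgd hfc hg0 hgL
    exact this
  -- integration by parts : S = -∫ g f'
  have hibp := intervalIntegral.integral_mul_deriv_eq_deriv_mul
    (u := g) (u' := f) (v := f) (v' := f') (fun x _ => hgd x) (fun x _ => hd x)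
    (hfc.intervalIntegrable 0 L) (hc.intervalIntegrable 0 L)
  have hS_eq : S = -∫ x in (0:ℝ)..L, g x * f' x := by
    rw [hg0, hgL] at hibp
    have : ∫ x in (0:ℝ)..L, f x * f x = S := by
      rw [hS_def]; apply intervalIntegral.integral_congr; intro x _; ring
    rw [hibp]; linarith [this]
  clear_value S A B
  -- Young's inequality
  have hy : ∀ t : ℝ, 0 < t → 2*S ≤ t*A + B/t := by
    intro t ht
    have h1 : ∫ x in (0:ℝ)..L, (-(2:ℝ)) * (g x * f' x) = 2*S := by
      rw [intervalIntegral.integral_const_mul, hS_eq]; ring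
    have h2 : ∫ x in (0:ℝ)..L, (t*(g x)^2 + (f' x)^2/t) = t*A + B/t := by
      rw [intervalIntegral.integral_add
        (((by fun_prop : Continuous fun x => (g x)^2).intervalIntegrable 0 L).const_mul t)
        (((by fun_prop : Continuous fun x => (f' x)^2).intervalIntegrable 0 L).div_const t),
        intervalIntegral.integral_const_mul, intervalIntegral.integral_div, hA_def, hB_def]
    rw [← h1, ← h2]
    apply intervalIntegral.integral_mono_on hL.le
      (((by fun_prop : Continuous fun x => (-(2:ℝ)) * (g x * f' x))).intervalIntegrable 0 L)
      ((by fun_prop : Continuous fun x => (t*(g x)^2 + (f' x)^2/t)).intervalIntegrable 0 L)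
    intro x _
    have h3 : 0 ≤ (t * g x + f' x)^2 / t := div_nonneg (sq_nonneg _) ht.le
    have h4 : (t * g x + f' x)^2 / t = t*(g x)^2 + 2*(g x * f' x) + (f' x)^2/t := by
      field_simp; ring
    linarith [h4 ▸ h3]
  -- conclude S ≤ k * B
  rcases le_or_gt S 0 with hS | hS
  · calc S ≤ 0 := hS
      _ ≤ k * B := by positivity
  rcases eq_or_lt_of_le hBnn with hB | hB
  · exfalso
    have h := hy (1/k) (by positivity)
    rw [← hB] at h
    have h2 : (1/k)*A ≤ (1/k)*(k*S) := mul_le_mul_of_nonneg_left hP (by positivity)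
    have h3 : (1/k)*(k*S) = S := by field_simp
    have h4 : (0:ℝ)/(1/k) = 0 := by simp
    linarith
  · set t := Real.sqrt (B/(k*S)) with ht_def
    have htpos : 0 < t := Real.sqrt_pos.2 (by positivity)
    have ht2 : t^2 = B/(k*S) := Real.sq_sqrt (by positivity)
    have h := hy t htpos
    have hkS : A ≤ k*S := hP
    have h1 : 2*S*t ≤ k*S*t^2 + B := by
      have h1a : t*A ≤ t*(k*S) := mul_le_mul_of_nonneg_left hkS htpos.le
      have h1b : (B/t)*t = B := div_mul_cancel₀ _ htpos.ne'
      nlinarith [h, htpos]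
    have h2 : k*S*t^2 = B := by
      rw [ht2]; field_simp
    have h3 : S*t ≤ B := by linarith
    have h5 : S^2 * t^2 ≤ B^2 := by nlinarith [h3, mul_pos hS htpos]
    rw [ht2] at h5
    have e : S^2 * (B/(k*S)) = S*B/k := by field_simp
    rw [e, div_le_iff₀ hk] at h5
    have : S * B ≤ (k*B)*B := by linarith [h5]
    exact le_of_mul_le_mul_right this hB

section Helpers

lemma hasDerivAt_slice1 {F : ℝ × ℝ → ℝ} (hF : ContDiff ℝ (⊤ : ℕ∞) F) (r φ : ℝ) :
    HasDerivAt (fun s => F (s, φ)) (fderiv ℝ F (r, φ) (1, 0)) r := by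
  have h1 : HasFDerivAt F (fderiv ℝ F (r,φ)) (r,φ) :=
    (hF.differentiable (by simp) (r,φ)).hasFDerivAt
  have h2 : HasDerivAt (fun s : ℝ => (s, φ)) ((1:ℝ), (0:ℝ)) r :=
    (hasDerivAt_id r).prodMk (hasDerivAt_const r φ)
  exact h1.comp_hasDerivAt r h2

lemma hasDerivAt_slice2 {F : ℝ × ℝ → ℝ} (hF : ContDiff ℝ (⊤ : ℕ∞) F) (r φ : ℝ) :
    HasDerivAt (fun ψ => F (r, ψ)) (fderiv ℝ F (r, φ) (0, 1)) φ := by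
  have h1 : HasFDerivAt F (fderiv ℝ F (r,φ)) (r,φ) :=
    (hF.differentiable (by simp) (r,φ)).hasFDerivAt
  have h2 : HasDerivAt (fun ψ : ℝ => (r, ψ)) ((0:ℝ), (1:ℝ)) φ :=
    (hasDerivAt_const φ r).prodMk (hasDerivAt_id φ)
  exact h1.comp_hasDerivAt φ h2

lemma deriv_slice1 {F : ℝ × ℝ → ℝ} (hF : ContDiff ℝ (⊤ : ℕ∞) F) (r φ : ℝ) :
    deriv (fun s => F (s, φ)) r = fderiv ℝ F (r, φ) (1, 0) :=
  (hasDerivAt_slice1 hF r φ).deriv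

lemma deriv_slice2 {F : ℝ × ℝ → ℝ} (hF : ContDiff ℝ (⊤ : ℕ∞) F) (r φ : ℝ) :
    deriv (fun ψ => F (r, ψ)) φ = fderiv ℝ F (r, φ) (0, 1) :=
  (hasDerivAt_slice2 hF r φ).deriv

lemma continuous_fderiv_apply {F : ℝ × ℝ → ℝ} (hF : ContDiff ℝ (⊤ : ℕ∞) F) (v : ℝ × ℝ) :
    Continuous (fun p : ℝ × ℝ => fderiv ℝ F p v) := by
  have h := (hF.continuous_fderiv (by simp))
  exact (ContinuousLinearMap.apply ℝ ℝ v).continuous.comp h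

end Helpers

lemma mean_zero_ur {θ : ℝ} (hθ : 0 < θ) {ur uφ : ℝ → ℝ → ℝ}
    (hur : ContDiff ℝ (⊤ : ℕ∞) (fun p : ℝ × ℝ => ur p.1 p.2))
    (huφ : ContDiff ℝ (⊤ : ℕ∞) (fun p : ℝ × ℝ => uφ p.1 p.2))
    {r₀ r₁ : ℝ} (hr₀ : 0 < r₀) (hr01 : r₀ < r₁)
    (hsupp : ∀ r φ : ℝ, r ∉ Icc r₀ r₁ → ur r φ = 0 ∧ uφ r φ = 0)
    (hdiv : ∀ r : ℝ, 0 < r → ∀ φ ∈ Ioo (0:ℝ) θ,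
      r * deriv (fun s => ur s φ) r + ur r φ + deriv (fun ψ => uφ r ψ) φ = 0)
    (hbc : ∀ r : ℝ, 0 < r → uφ r 0 = 0 ∧ uφ r θ = 0) :
    ∀ r : ℝ, 0 < r → ∫ φ in (0:ℝ)..θ, ur r φ = 0 := by
  set F : ℝ × ℝ → ℝ := fun p => ur p.1 p.2 with hF_def
  set G : ℝ × ℝ → ℝ := fun p => uφ p.1 p.2 with hG_def
  set g : ℝ → ℝ := fun r => ∫ φ in (0:ℝ)..θ, ur r φ with hg_def
  have hslice_cont : ∀ x : ℝ, Continuous (fun t => ur x t) :=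
    fun x => hur.continuous.comp (Continuous.prodMk_right x)
  -- derivative of g
  have hgd : ∀ r : ℝ, HasDerivAt g (∫ φ in (0:ℝ)..θ, fderiv ℝ F (r,φ) (1,0)) r := by
    intro r
    have hK : IsCompact (Icc (r-1) (r+1) ×ˢ Icc (0:ℝ) θ) := isCompact_Icc.prod isCompact_Icc
    obtain ⟨C, hC⟩ := hK.exists_bound_of_continuousOn
      ((continuous_fderiv_apply hur ((1:ℝ),(0:ℝ))).continuousOn)
    have := intervalIntegral.hasDerivAt_integral_of_dominated_loc_of_deriv_le
      (F := fun x t => ur x t) (F' := fun x t => fderiv ℝ F (x,t) (1,0)) (x₀ := r)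
      (a := 0) (b := θ) (μ := volume) (bound := fun _ => C) (Metric.ball_mem_nhds r one_pos)
      (Filter.Eventually.of_forall fun x => ((hslice_cont x).aestronglyMeasurable))
      ((hslice_cont r).intervalIntegrable 0 θ)
      (((continuous_fderiv_apply hur ((1:ℝ),(0:ℝ))).comp
        (Continuous.prodMk_right r)).aestronglyMeasurable)
      (Filter.Eventually.of_forall fun t ht x hx => by
        apply hC
        constructor
        · simp only [Metric.mem_ball, Real.dist_eq] at hx
          constructor <;> [linarith [abs_le.1 hx.le |>.1]; linarith [abs_le.1 hx.le |>.2]]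
        · rw [uIoc_of_le hθ.le] at ht
          exact ⟨ht.1.le, ht.2⟩)
      (intervalIntegrable_const)
      (Filter.Eventually.of_forall fun t _ x _ => hasDerivAt_slice1 hur x t)
    exact this.2
  have hgc : Continuous g := continuous_iff_continuousAt.2 fun x => (hgd x).continuousAt
  -- (r * g r)' = 0 for r > 0
  have hh : ∀ r : ℝ, 0 < r → HasDerivAt (fun s => s * g s) 0 r := by
    intro r hr
    have h1 := (hasDerivAt_id r).mul (hgd r)
    have h2 : 1 * g r + r * ∫ φ in (0:ℝ)..θ, fderiv ℝ F (r,φ) (1,0) = 0 := by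
      have e1 : r * ∫ φ in (0:ℝ)..θ, fderiv ℝ F (r,φ) (1,0)
          = ∫ φ in (0:ℝ)..θ, r * fderiv ℝ F (r,φ) (1,0) :=
        (intervalIntegral.integral_const_mul _ _).symm
      have hi1 : IntervalIntegrable (fun φ => r * fderiv ℝ F (r,φ) (1,0)) volume 0 θ :=
        (continuous_const.mul ((continuous_fderiv_apply hur ((1:ℝ),(0:ℝ))).comp
          (Continuous.prodMk_right r))).intervalIntegrable 0 θ
      have hi2 : IntervalIntegrable (fun φ => ur r φ) volume 0 θ :=
        (hslice_cont r).intervalIntegrable 0 θ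
      have e2 : g r + ∫ φ in (0:ℝ)..θ, r * fderiv ℝ F (r,φ) (1,0)
          = ∫ φ in (0:ℝ)..θ, (ur r φ + r * fderiv ℝ F (r,φ) (1,0)) := by
        rw [intervalIntegral.integral_add hi2 hi1]
      have e3 : ∫ φ in (0:ℝ)..θ, (ur r φ + r * fderiv ℝ F (r,φ) (1,0))
          = ∫ φ in (0:ℝ)..θ, -(deriv (fun ψ => uφ r ψ) φ) := by
        rw [intervalIntegral.integral_of_le hθ.le, intervalIntegral.integral_of_le hθ.le,
          integral_Ioc_eq_integral_Ioo, integral_Ioc_eq_integral_Ioo]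
        apply setIntegral_congr_fun measurableSet_Ioo
        intro φ hφ
        have h := hdiv r hr φ hφ
        rw [deriv_slice1 hur r φ] at h
        simp only [hF_def]
        linarith
      have e4 : ∫ φ in (0:ℝ)..θ, -(deriv (fun ψ => uφ r ψ) φ) = 0 := by
        rw [intervalIntegral.integral_neg]
        have hψ : ∀ φ' : ℝ, φ' ∈ uIcc 0 θ →
            HasDerivAt (fun ψ => uφ r ψ) (deriv (fun ψ => uφ r ψ) φ') φ' := by
          intro φ' _
          rw [deriv_slice2 huφ r φ']
          exact hasDerivAt_slice2 huφ r φ'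
        have hint : IntervalIntegrable (fun φ' => deriv (fun ψ => uφ r ψ) φ') volume 0 θ := by
          have he : (fun φ' => deriv (fun ψ => uφ r ψ) φ') =
              fun φ' => fderiv ℝ G (r,φ') (0,1) := funext (deriv_slice2 huφ r)
          rw [he]
          exact (((continuous_fderiv_apply huφ ((0:ℝ),(1:ℝ))).comp
            (Continuous.prodMk_right r))).intervalIntegrable 0 θ
        rw [intervalIntegral.integral_eq_sub_of_hasDerivAt hψ hint,
          (hbc r hr).1, (hbc r hr).2]
        simp
      rw [one_mul, e1, ← e3, ← e2] at *
      linarith [e2, e3, e4]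
    rw [← h2]
    exact h1
  -- g vanishes for r < r₀
  have hg_small : ∀ r : ℝ, r < r₀ → g r = 0 := by
    intro r hrr
    have : ∀ φ, ur r φ = 0 := fun φ => (hsupp r φ (fun hmem => absurd hmem.1 (not_le.2 hrr))).1
    simp only [hg_def]
    rw [intervalIntegral.integral_congr (g := fun _ => (0:ℝ)) (fun φ _ => this φ)]
    simp
  -- conclude
  intro r hr
  rcases lt_or_ge r r₀ with h | h
  · exact hg_small r h
  · set a := r₀/2 with ha_def
    have ha : 0 < a := by positivity
    have har : a ≤ r := by linarith
    have hconst := constant_of_has_deriv_right_zero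
      (f := fun s => s * g s) (a := a) (b := r)
      ((continuous_id.mul hgc).continuousOn)
      (fun x hx => (hh x (lt_of_lt_of_le ha hx.1)).hasDerivWithinAt)
      r (right_mem_Icc.2 har)
    have hga : g a = 0 := hg_small a (by linarith)
    have hconst' : r * g r = a * g a := hconst
    rw [hga, mul_zero] at hconst'
    have : r * g r = 0 := hconst'
    rcases mul_eq_zero.1 this with h' | h'
    · exact absurd h' hr.ne'
    · exact h'

set_option maxHeartbeats 1000000 in
lemma per_r_ineq {θ : ℝ} (hθ0 : 0 < θ) (hθπ : θ < π) {ur uφ : ℝ → ℝ → ℝ}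
    (hur : ContDiff ℝ (⊤ : ℕ∞) (fun p : ℝ × ℝ => ur p.1 p.2))
    (huφ : ContDiff ℝ (⊤ : ℕ∞) (fun p : ℝ × ℝ => uφ p.1 p.2))
    (r : ℝ) (hmean : ∫ φ in (0:ℝ)..θ, ur r φ = 0)
    (hbc0 : uφ r 0 = 0) (hbcθ : uφ r θ = 0) :
    (∫ φ in (0:ℝ)..θ, ((ur r φ)^2 + (uφ r φ)^2)) ≤ (2*(π^2+θ^2)/(π^2-θ^2)^2*θ^2) *
      ∫ φ in (0:ℝ)..θ, ((deriv (fun ψ => ur r ψ) φ - uφ r φ)^2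
        + (deriv (fun ψ => uφ r ψ) φ + ur r φ)^2) := by
  have hπ : (0:ℝ) < π := Real.pi_pos
  set F : ℝ × ℝ → ℝ := fun p => ur p.1 p.2 with hF_def
  set G : ℝ × ℝ → ℝ := fun p => uφ p.1 p.2 with hG_def
  set A : ℝ → ℝ := fun φ => ur r φ with hA_def
  set B : ℝ → ℝ := fun φ => uφ r φ with hB_def
  set A' : ℝ → ℝ := fun φ => fderiv ℝ F (r,φ) ((0:ℝ),(1:ℝ)) with hA'_def
  set B' : ℝ → ℝ := fun φ => fderiv ℝ G (r,φ) ((0:ℝ),(1:ℝ)) with hB'_def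
  have hAeq : (fun φ => deriv (fun ψ => ur r ψ) φ) = A' := funext (deriv_slice2 hur r)
  have hBeq : (fun φ => deriv (fun ψ => uφ r ψ) φ) = B' := funext (deriv_slice2 huφ r)
  have hdA : ∀ φ, HasDerivAt A (A' φ) φ := fun φ => hasDerivAt_slice2 hur r φ
  have hdB : ∀ φ, HasDerivAt B (B' φ) φ := fun φ => hasDerivAt_slice2 huφ r φ
  have hcA : Continuous A := hur.continuous.comp (Continuous.prodMk_right r)
  have hcB : Continuous B := huφ.continuous.comp (Continuous.prodMk_right r)
  have hcA' : Continuous A' :=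
    (continuous_fderiv_apply hur _).comp (Continuous.prodMk_right r)
  have hcB' : Continuous B' :=
    (continuous_fderiv_apply huφ _).comp (Continuous.prodMk_right r)
  set k := (θ/π)^2 with hk_def
  have hk0 : 0 < k := by positivity
  have hk1 : k < 1 := by
    rw [hk_def, div_pow]
    rw [div_lt_one (by positivity)]
    nlinarith
  set ε := (1-k)/(2*k) with hε_def
  have hε0 : 0 < ε := by
    apply div_pos <;> [linarith; linarith]
  -- the six integrals
  set X := ∫ φ in (0:ℝ)..θ, (A φ)^2 with hX_def
  set Y := ∫ φ in (0:ℝ)..θ, (B φ)^2 with hY_def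
  set WA := ∫ φ in (0:ℝ)..θ, (A' φ)^2 with hWA_def
  set WB := ∫ φ in (0:ℝ)..θ, (B' φ)^2 with hWB_def
  set S2 := ∫ φ in (0:ℝ)..θ, (A' φ - B φ)^2 with hS2_def
  set S4 := ∫ φ in (0:ℝ)..θ, (B' φ + A φ)^2 with hS4_def
  have hS2nn : 0 ≤ S2 := intervalIntegral.integral_nonneg hθ0.le (fun x _ => sq_nonneg _)
  have hS4nn : 0 ≤ S4 := intervalIntegral.integral_nonneg hθ0.le (fun x _ => sq_nonneg _)
  have hX1 : X ≤ k * WA := poincare_meanzero hθ0 hdA hcA' hmean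
  have hY1 : Y ≤ k * WB := poincare_dirichlet hθ0 hdB hcB' hbc0 hbcθ
  -- Young bounds
  have hWA1 : WA ≤ (1+ε)*Y + (1+1/ε)*S2 := by
    have hsplit : (∫ φ in (0:ℝ)..θ, ((1+ε)*(B φ)^2 + (1+1/ε)*(A' φ - B φ)^2))
        = (1+ε)*Y + (1+1/ε)*S2 := by
      rw [intervalIntegral.integral_add
        (((by fun_prop : Continuous fun φ => (B φ)^2).intervalIntegrable 0 θ).const_mul _)
        (((by fun_prop : Continuous fun φ => (A' φ - B φ)^2).intervalIntegrable 0 θ).const_mul _),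
        intervalIntegral.integral_const_mul, intervalIntegral.integral_const_mul]
    rw [← hsplit]
    apply intervalIntegral.integral_mono_on hθ0.le
      ((by fun_prop : Continuous fun φ => (A' φ)^2).intervalIntegrable 0 θ)
      ((by fun_prop :
        Continuous fun φ => ((1+ε)*(B φ)^2 + (1+1/ε)*(A' φ - B φ)^2)).intervalIntegrable 0 θ)
    intro x _
    have := young_sq ε (B x) (A' x - B x) hε0
    calc (A' x)^2 = (B x + (A' x - B x))^2 := by ring_nf
      _ ≤ (1+ε)*(B x)^2 + (1+1/ε)*(A' x - B x)^2 := this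
  have hWB1 : WB ≤ (1+ε)*X + (1+1/ε)*S4 := by
    have hsplit : (∫ φ in (0:ℝ)..θ, ((1+ε)*(A φ)^2 + (1+1/ε)*(B' φ + A φ)^2))
        = (1+ε)*X + (1+1/ε)*S4 := by
      rw [intervalIntegral.integral_add
        (((by fun_prop : Continuous fun φ => (A φ)^2).intervalIntegrable 0 θ).const_mul _)
        (((by fun_prop : Continuous fun φ => (B' φ + A φ)^2).intervalIntegrable 0 θ).const_mul _),
        intervalIntegral.integral_const_mul, intervalIntegral.integral_const_mul]
    rw [← hsplit]
    apply intervalIntegral.integral_mono_on hθ0.le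
      ((by fun_prop : Continuous fun φ => (B' φ)^2).intervalIntegrable 0 θ)
      ((by fun_prop :
        Continuous fun φ => ((1+ε)*(A φ)^2 + (1+1/ε)*(B' φ + A φ)^2)).intervalIntegrable 0 θ)
    intro x _
    have hy := young_sq ε (-A x) (B' x + A x) hε0
    calc (B' x)^2 = (-A x + (B' x + A x))^2 := by ring
      _ ≤ (1+ε)*(-A x)^2 + (1+1/ε)*(B' x + A x)^2 := hy
      _ = (1+ε)*(A x)^2 + (1+1/ε)*(B' x + A x)^2 := by ring
  -- combine
  have hkne : k ≠ 0 := hk0.ne'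
  have hk1ne : (1:ℝ) - k ≠ 0 := by linarith
  have c1 : k*(1+ε) = (1+k)/2 := by
    rw [hε_def]; field_simp; ring
  have c2 : k*(1+1/ε) = k*(1+k)/(1-k) := by
    have e1 : 1/ε = 2*k/(1-k) := by rw [hε_def, one_div_div]
    rw [e1, eq_div_iff hk1ne]
    linear_combination k * (div_mul_cancel₀ (2*k) hk1ne)
  have hX3 : X ≤ (1+k)/2*Y + (k*(1+k)/(1-k))*S2 := by
    have hX2 : X ≤ k*((1+ε)*Y + (1+1/ε)*S2) :=
      hX1.trans (mul_le_mul_of_nonneg_left hWA1 hk0.le)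
    calc X ≤ k*((1+ε)*Y + (1+1/ε)*S2) := hX2
      _ = k*(1+ε)*Y + k*(1+1/ε)*S2 := by ring
      _ = (1+k)/2*Y + (k*(1+k)/(1-k))*S2 := by rw [c1, c2]
  have hY3 : Y ≤ (1+k)/2*X + (k*(1+k)/(1-k))*S4 := by
    have hY2 : Y ≤ k*((1+ε)*X + (1+1/ε)*S4) :=
      hY1.trans (mul_le_mul_of_nonneg_left hWB1 hk0.le)
    calc Y ≤ k*((1+ε)*X + (1+1/ε)*S4) := hY2
      _ = k*(1+ε)*X + k*(1+1/ε)*S4 := by ring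
      _ = (1+k)/2*X + (k*(1+k)/(1-k))*S4 := by rw [c1, c2]
  have hsum : X + Y ≤ (1+k)/2*(X+Y) + (k*(1+k)/(1-k))*(S2+S4) := by linarith
  have key : (1-k)^2*(X+Y) ≤ 2*k*(1+k)*(S2+S4) := by
    have h := mul_le_mul_of_nonneg_left hsum (by linarith : (0:ℝ) ≤ 2*(1-k))
    have e : 2*(1-k)*((1+k)/2*(X+Y) + (k*(1+k)/(1-k))*(S2+S4))
        = (1-k)*(1+k)*(X+Y) + 2*(k*(1+k))*(S2+S4) := by
      field_simp
    nlinarith [h, e]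
  -- identify the integrals in the statement
  have hIL : (∫ φ in (0:ℝ)..θ, ((ur r φ)^2 + (uφ r φ)^2)) = X + Y := by
    rw [hX_def, hY_def, ← intervalIntegral.integral_add
      ((by fun_prop : Continuous fun φ => (A φ)^2).intervalIntegrable 0 θ)
      ((by fun_prop : Continuous fun φ => (B φ)^2).intervalIntegrable 0 θ)]
  have hIR : (∫ φ in (0:ℝ)..θ, ((deriv (fun ψ => ur r ψ) φ - uφ r φ)^2
        + (deriv (fun ψ => uφ r ψ) φ + ur r φ)^2)) = S2 + S4 := by
    rw [hS2_def, hS4_def, ← intervalIntegral.integral_add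
      ((by fun_prop : Continuous fun φ => (A' φ - B φ)^2).intervalIntegrable 0 θ)
      ((by fun_prop : Continuous fun φ => (B' φ + A φ)^2).intervalIntegrable 0 θ)]
    apply intervalIntegral.integral_congr
    intro x _
    show (deriv (fun ψ => ur r ψ) x - uφ r x)^2 + (deriv (fun ψ => uφ r ψ) x + ur r x)^2
      = (A' x - B x)^2 + (B' x + A x)^2
    rw [show deriv (fun ψ => ur r ψ) x = A' x from deriv_slice2 hur r x,
      show deriv (fun ψ => uφ r ψ) x = B' x from deriv_slice2 huφ r x]
  rw [hIL, hIR]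
  have hπθ : π^2 - θ^2 ≠ 0 := by nlinarith
  have hCeq : 2*(π^2+θ^2)/(π^2-θ^2)^2*θ^2 = 2*k*(1+k)/(1-k)^2 := by
    rw [hk_def]
    field_simp
  rw [hCeq, div_mul_eq_mul_div, le_div_iff₀ (pow_pos (by linarith : (0:ℝ) < 1-k) 2)]
  nlinarith [key]

lemma vanish_outside {u : ℝ → ℝ → ℝ} {r₀ r₁ : ℝ}
    (hsupp : ∀ r φ : ℝ, r ∉ Icc r₀ r₁ → u r φ = 0) {r : ℝ} (hr : r ∉ Icc r₀ r₁) (φ : ℝ) :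
    u r φ = 0 ∧ deriv (fun s => u s φ) r = 0 ∧ deriv (fun ψ => u r ψ) φ = 0 := by
  refine ⟨hsupp r φ hr, ?_, ?_⟩
  · have hop : IsOpen (Icc r₀ r₁)ᶜ := isClosed_Icc.isOpen_compl
    have hev : (fun s => u s φ) =ᶠ[nhds r] (fun _ => (0:ℝ)) :=
      Filter.eventuallyEq_of_mem (hop.mem_nhds hr) (fun s hs => hsupp s φ hs)
    rw [hev.deriv_eq, deriv_const]
  · have : (fun ψ => u r ψ) = fun _ => (0:ℝ) := funext fun ψ => hsupp r ψ hr
    rw [this, deriv_const]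

lemma cont_deriv1 {u : ℝ → ℝ → ℝ} (hu : ContDiff ℝ (⊤ : ℕ∞) (fun p : ℝ × ℝ => u p.1 p.2)) :
    Continuous (fun q : ℝ × ℝ => deriv (fun s => u s q.1) q.2) := by
  have he : (fun q : ℝ × ℝ => deriv (fun s => u s q.1) q.2)
      = fun q : ℝ × ℝ => fderiv ℝ (fun p : ℝ × ℝ => u p.1 p.2) (q.2, q.1) ((1:ℝ),(0:ℝ)) :=
    funext fun q => deriv_slice1 hu q.2 q.1
  rw [he]
  exact (continuous_fderiv_apply hu _).comp (continuous_snd.prodMk continuous_fst)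

lemma cont_deriv2 {u : ℝ → ℝ → ℝ} (hu : ContDiff ℝ (⊤ : ℕ∞) (fun p : ℝ × ℝ => u p.1 p.2)) :
    Continuous (fun q : ℝ × ℝ => deriv (fun ψ => u q.2 ψ) q.1) := by
  have he : (fun q : ℝ × ℝ => deriv (fun ψ => u q.2 ψ) q.1)
      = fun q : ℝ × ℝ => fderiv ℝ (fun p : ℝ × ℝ => u p.1 p.2) (q.2, q.1) ((0:ℝ),(1:ℝ)) :=
    funext fun q => deriv_slice2 hu q.2 q.1
  rw [he]
  exact (continuous_fderiv_apply hu _).comp (continuous_snd.prodMk continuous_fst)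

lemma cont_integrand {g : ℝ × ℝ → ℝ} (hg : Continuous g) {r₀ : ℝ} (hr₀ : 0 < r₀)
    (hz : ∀ q : ℝ × ℝ, q.2 < r₀ → g q = 0) (c : ℝ) :
    Continuous (fun q : ℝ × ℝ => q.2 ^ c * g q * q.2) := by
  rw [continuous_iff_continuousAt]
  intro q
  rcases lt_or_ge q.2 r₀ with h | h
  · have hmem : {p : ℝ × ℝ | p.2 < r₀} ∈ nhds q :=
      (isOpen_lt continuous_snd continuous_const).mem_nhds h
    have hev : (fun p : ℝ × ℝ => p.2 ^ c * g p * p.2) =ᶠ[nhds q] (fun _ => (0:ℝ)) :=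
      Filter.eventuallyEq_of_mem hmem (fun p hp => by rw [hz p hp]; ring)
    exact continuousAt_const.congr hev.symm
  · have hq2 : q.2 ≠ 0 := by linarith [hr₀]
    have h1 : ContinuousAt (fun p : ℝ × ℝ => p.2 ^ c) q :=
      (Real.continuousAt_rpow_const _ _ (Or.inl hq2)).comp continuous_snd.continuousAt
    exact (h1.mul hg.continuousAt).mul continuous_snd.continuousAt

lemma integrand_integrable {θ r₀ r₁ : ℝ} (hθ : 0 < θ) (h0 : 0 < r₀) (h01 : r₀ < r₁)
    {f : ℝ × ℝ → ℝ} (hf : Continuous f) (hz : ∀ q : ℝ × ℝ, q.2 ∉ Icc r₀ r₁ → f q = 0) :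
    Integrable f ((volume.restrict (Ioc (0:ℝ) θ)).prod (volume.restrict (Ioi (0:ℝ)))) := by
  obtain ⟨M0, hM0⟩ := (isCompact_Icc.prod isCompact_Icc :
    IsCompact (Icc (0:ℝ) θ ×ˢ Icc r₀ r₁)).exists_bound_of_continuousOn hf.continuousOn
  set M := max M0 0 with hM_def
  have hMnn : (0:ℝ) ≤ M := le_max_right _ _
  apply Integrable.mono' (g := (univ ×ˢ Icc r₀ r₁).indicator (fun _ => M))
  · rw [integrable_indicator_iff (MeasurableSet.univ.prod measurableSet_Icc)]
    refine integrableOn_const (ne_of_lt ?_)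
    rw [Measure.prod_prod]
    apply ENNReal.mul_lt_top
    · rw [Measure.restrict_apply_univ]
      simp [Real.volume_Ioc]
    · rw [Measure.restrict_apply measurableSet_Icc]
      exact lt_of_le_of_lt (measure_mono inter_subset_left)
        (by simp [Real.volume_Icc])
  · exact hf.aestronglyMeasurable
  · have hprod : (volume.restrict (Ioc (0:ℝ) θ)).prod (volume.restrict (Ioi (0:ℝ)))
        = (volume.prod volume).restrict ((Ioc (0:ℝ) θ) ×ˢ (Ioi (0:ℝ))) :=
      Measure.prod_restrict _ _
    have hae : ∀ᵐ q ∂((volume.restrict (Ioc (0:ℝ) θ)).prod (volume.restrict (Ioi (0:ℝ)))),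
        q ∈ (Ioc (0:ℝ) θ) ×ˢ (Ioi (0:ℝ)) := by
      rw [hprod]
      exact ae_restrict_mem (measurableSet_Ioc.prod measurableSet_Ioi)
    filter_upwards [hae] with q hq
    rcases em (q.2 ∈ Icc r₀ r₁) with hmem | hmem
    · have hqmem : q ∈ (univ ×ˢ Icc r₀ r₁ : Set (ℝ × ℝ)) := ⟨mem_univ _, hmem⟩
      rw [indicator_of_mem hqmem]
      exact hM0 q ⟨⟨hq.1.1.le, hq.1.2⟩, hmem⟩ |>.trans (le_max_left _ _)
    · have hqnm : q ∉ (univ ×ˢ Icc r₀ r₁ : Set (ℝ × ℝ)) := fun hc => hmem hc.2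
      rw [indicator_of_notMem hqnm, hz q hmem, norm_zero]

set_option maxHeartbeats 1600000 in
/-- Improved Hardy inequality on a wedge of opening angle `θ` for smooth divergence-free
vector fields `u = u_r e_r + u_φ e_φ` (in polar coordinates), compactly supported away from
the tip and infinity, tangent to the boundary:
`‖u/r‖_α² ≤ C₀(θ) θ² ‖∇u‖_α²` with `C₀` increasing and independent of `α`. -/
theorem improved_hardy_wedge :
    ∃ C₀ : ℝ → ℝ, MonotoneOn C₀ (Ioo 0 π) ∧ (∀ θ ∈ Ioo (0:ℝ) π, 0 < C₀ θ) ∧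
      ∀ θ ∈ Ioo (0:ℝ) π, ∀ α : ℝ, α ≠ 0 →
      ∀ ur uφ : ℝ → ℝ → ℝ,
        ContDiff ℝ (⊤ : ℕ∞) (fun p : ℝ × ℝ => ur p.1 p.2) →
        ContDiff ℝ (⊤ : ℕ∞) (fun p : ℝ × ℝ => uφ p.1 p.2) →
        (∃ r₀ r₁ : ℝ, 0 < r₀ ∧ r₀ < r₁ ∧
          ∀ r φ : ℝ, r ∉ Icc r₀ r₁ → ur r φ = 0 ∧ uφ r φ = 0) →
        (∀ r : ℝ, 0 < r → ∀ φ ∈ Ioo (0:ℝ) θ,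
          r * deriv (fun s => ur s φ) r + ur r φ + deriv (fun ψ => uφ r ψ) φ = 0) →
        (∀ r : ℝ, 0 < r → uφ r 0 = 0 ∧ uφ r θ = 0) →
        (∫ φ in (0:ℝ)..θ, ∫ r in Ioi (0:ℝ),
            r ^ (-2*α - 2) * ((ur r φ)^2 + (uφ r φ)^2) * r) ≤
          C₀ θ * θ^2 *
            ∫ φ in (0:ℝ)..θ, ∫ r in Ioi (0:ℝ),
              r ^ (-2*α - 2) *
                ((r * deriv (fun s => ur s φ) r)^2 +
                 (deriv (fun ψ => ur r ψ) φ - uφ r φ)^2 +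
                 (r * deriv (fun s => uφ s φ) r)^2 +
                 (deriv (fun ψ => uφ r ψ) φ + ur r φ)^2) * r := by
  have hπ : (0:ℝ) < π := Real.pi_pos
  refine ⟨fun θ => 2*(π^2+θ^2)/(π^2-θ^2)^2, ?_, ?_, ?_⟩
  · -- monotone
    intro a ha b hb hab
    have h1 : (0:ℝ) < π^2 - b^2 := by nlinarith [hb.1, hb.2]
    have h2 : π^2 - b^2 ≤ π^2 - a^2 := by nlinarith [ha.1, hb.1, hab]
    exact div_le_div₀ (by positivity) (by nlinarith [ha.1, hab]) (pow_pos h1 2)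
      (pow_le_pow_left₀ h1.le h2 2)
  · -- positive
    intro θ hθ
    have h1 : (0:ℝ) < π^2 - θ^2 := by nlinarith [hθ.1, hθ.2]
    exact div_pos (by positivity) (pow_pos h1 2)
  intro θ hθ α hα ur uφ hur huφ hsupp hdiv hbc
  obtain ⟨hθ0, hθπ⟩ := hθ
  obtain ⟨r₀, r₁, hr₀, hr01, hsupp'⟩ := hsupp
  have hmean := mean_zero_ur hθ0 hur huφ hr₀ hr01 hsupp' hdiv hbc
  set μ := volume.restrict (Ioc (0:ℝ) θ) with hμ_def
  set ν := volume.restrict (Ioi (0:ℝ)) with hν_def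
  set fL : ℝ → ℝ → ℝ := fun φ r =>
    r ^ (-2*α - 2) * ((ur r φ)^2 + (uφ r φ)^2) * r with hfL_def
  set fR : ℝ → ℝ → ℝ := fun φ r =>
    r ^ (-2*α - 2) *
      ((r * deriv (fun s => ur s φ) r)^2 +
       (deriv (fun ψ => ur r ψ) φ - uφ r φ)^2 +
       (r * deriv (fun s => uφ s φ) r)^2 +
       (deriv (fun ψ => uφ r ψ) φ + ur r φ)^2) * r with hfR_def
  set C : ℝ := 2*(π^2+θ^2)/(π^2-θ^2)^2*θ^2 with hC_def
  have hπθ : (0:ℝ) < π^2 - θ^2 := by nlinarith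
  have hCnn : 0 ≤ C := by
    rw [hC_def]
    positivity
  -- continuity of the uncurried integrands
  have hGLcont : Continuous (fun q : ℝ × ℝ => (ur q.2 q.1)^2 + (uφ q.2 q.1)^2) := by
    have h1 : Continuous (fun q : ℝ × ℝ => ur q.2 q.1) :=
      hur.continuous.comp (continuous_snd.prodMk continuous_fst)
    have h2 : Continuous (fun q : ℝ × ℝ => uφ q.2 q.1) :=
      huφ.continuous.comp (continuous_snd.prodMk continuous_fst)
    exact (h1.pow 2).add (h2.pow 2)
  have hGRcont : Continuous (fun q : ℝ × ℝ =>
      (q.2 * deriv (fun s => ur s q.1) q.2)^2 +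
      (deriv (fun ψ => ur q.2 ψ) q.1 - uφ q.2 q.1)^2 +
      (q.2 * deriv (fun s => uφ s q.1) q.2)^2 +
      (deriv (fun ψ => uφ q.2 ψ) q.1 + ur q.2 q.1)^2) := by
    have h1 : Continuous (fun q : ℝ × ℝ => ur q.2 q.1) :=
      hur.continuous.comp (continuous_snd.prodMk continuous_fst)
    have h2 : Continuous (fun q : ℝ × ℝ => uφ q.2 q.1) :=
      huφ.continuous.comp (continuous_snd.prodMk continuous_fst)
    have h3 := cont_deriv1 hur
    have h4 := cont_deriv1 huφ
    have h5 := cont_deriv2 hur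
    have h6 := cont_deriv2 huφ
    exact ((((continuous_snd.mul h3).pow 2).add ((h5.sub h2).pow 2)).add
      ((continuous_snd.mul h4).pow 2)).add ((h6.add h1).pow 2)
  have hGLz : ∀ q : ℝ × ℝ, q.2 ∉ Icc r₀ r₁ →
      (ur q.2 q.1)^2 + (uφ q.2 q.1)^2 = 0 := by
    intro q hq
    obtain ⟨h1, _, _⟩ := vanish_outside (fun r φ h => (hsupp' r φ h).1) hq q.1
    obtain ⟨h2, _, _⟩ := vanish_outside (fun r φ h => (hsupp' r φ h).2) hq q.1
    rw [h1, h2]; ring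
  have hGRz : ∀ q : ℝ × ℝ, q.2 ∉ Icc r₀ r₁ →
      (q.2 * deriv (fun s => ur s q.1) q.2)^2 +
      (deriv (fun ψ => ur q.2 ψ) q.1 - uφ q.2 q.1)^2 +
      (q.2 * deriv (fun s => uφ s q.1) q.2)^2 +
      (deriv (fun ψ => uφ q.2 ψ) q.1 + ur q.2 q.1)^2 = 0 := by
    intro q hq
    obtain ⟨h1, h3, h5⟩ := vanish_outside (fun r φ h => (hsupp' r φ h).1) hq q.1
    obtain ⟨h2, h4, h6⟩ := vanish_outside (fun r φ h => (hsupp' r φ h).2) hq q.1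
    rw [h1, h2, h3, h4, h5, h6]; ring
  have hnotin : ∀ x : ℝ, x < r₀ → x ∉ Icc r₀ r₁ := fun x hx hc => absurd hc.1 (not_le.2 hx)
  have hcontL : Continuous (Function.uncurry fL) := by
    have := cont_integrand hGLcont hr₀ (fun q hq => hGLz q (hnotin _ hq)) (-2*α - 2)
    exact this
  have hcontR : Continuous (Function.uncurry fR) := by
    have := cont_integrand hGRcont hr₀ (fun q hq => hGRz q (hnotin _ hq)) (-2*α - 2)
    exact this
  have hzL : ∀ q : ℝ × ℝ, q.2 ∉ Icc r₀ r₁ → Function.uncurry fL q = 0 := by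
    intro q hq
    show q.2 ^ (-2*α - 2) * ((ur q.2 q.1)^2 + (uφ q.2 q.1)^2) * q.2 = 0
    rw [hGLz q hq]; ring
  have hzR : ∀ q : ℝ × ℝ, q.2 ∉ Icc r₀ r₁ → Function.uncurry fR q = 0 := by
    intro q hq
    show q.2 ^ (-2*α - 2) * _ * q.2 = 0
    rw [hGRz q hq]; ring
  have hIntL : Integrable (Function.uncurry fL) (μ.prod ν) :=
    integrand_integrable hθ0 hr₀ hr01 hcontL hzL
  have hIntR : Integrable (Function.uncurry fR) (μ.prod ν) :=
    integrand_integrable hθ0 hr₀ hr01 hcontR hzR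
  -- pointwise (in r) comparison of the inner integrals
  have hmono : ∀ r ∈ Ioi (0:ℝ), (∫ φ in Ioc (0:ℝ) θ, fL φ r) ≤ C * ∫ φ in Ioc (0:ℝ) θ, fR φ r := by
    intro r hr
    rw [mem_Ioi] at hr
    have hw : (0:ℝ) ≤ r ^ (-2*α - 2) * r :=
      mul_nonneg (Real.rpow_nonneg hr.le _) hr.le
    have eL : (∫ φ in Ioc (0:ℝ) θ, fL φ r)
        = (r ^ (-2*α - 2) * r) * ∫ φ in (0:ℝ)..θ, ((ur r φ)^2 + (uφ r φ)^2) := by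
      rw [intervalIntegral.integral_of_le hθ0.le, ← MeasureTheory.integral_const_mul]
      apply setIntegral_congr_fun measurableSet_Ioc
      intro φ _
      show fL φ r = _
      simp only [hfL_def]
      ring
    have eR : (∫ φ in Ioc (0:ℝ) θ, fR φ r)
        = (r ^ (-2*α - 2) * r) * ∫ φ in (0:ℝ)..θ,
          ((r * deriv (fun s => ur s φ) r)^2 +
           (deriv (fun ψ => ur r ψ) φ - uφ r φ)^2 +
           (r * deriv (fun s => uφ s φ) r)^2 +
           (deriv (fun ψ => uφ r ψ) φ + ur r φ)^2) := by
      rw [intervalIntegral.integral_of_le hθ0.le, ← MeasureTheory.integral_const_mul]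
      apply setIntegral_congr_fun measurableSet_Ioc
      intro φ _
      show fR φ r = _
      simp only [hfR_def]
      ring
    have h2 := per_r_ineq hθ0 hθπ hur huφ r (hmean r hr) (hbc r hr).1 (hbc r hr).2
    -- continuity of the φ-integrands at fixed r
    have hc1 : Continuous (fun φ => deriv (fun ψ => ur r ψ) φ) :=
      (cont_deriv2 hur).comp (continuous_id.prodMk continuous_const)
    have hc2 : Continuous (fun φ => deriv (fun ψ => uφ r ψ) φ) :=
      (cont_deriv2 huφ).comp (continuous_id.prodMk continuous_const)
    have hc3 : Continuous (fun φ => deriv (fun s => ur s φ) r) :=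
      (cont_deriv1 hur).comp (continuous_id.prodMk continuous_const)
    have hc4 : Continuous (fun φ => deriv (fun s => uφ s φ) r) :=
      (cont_deriv1 huφ).comp (continuous_id.prodMk continuous_const)
    have hc5 : Continuous (fun φ => ur r φ) := hur.continuous.comp (Continuous.prodMk_right r)
    have hc6 : Continuous (fun φ => uφ r φ) := huφ.continuous.comp (Continuous.prodMk_right r)
    have h24 : (∫ φ in (0:ℝ)..θ, ((deriv (fun ψ => ur r ψ) φ - uφ r φ)^2
          + (deriv (fun ψ => uφ r ψ) φ + ur r φ)^2))
        ≤ ∫ φ in (0:ℝ)..θ,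
          ((r * deriv (fun s => ur s φ) r)^2 +
           (deriv (fun ψ => ur r ψ) φ - uφ r φ)^2 +
           (r * deriv (fun s => uφ s φ) r)^2 +
           (deriv (fun ψ => uφ r ψ) φ + ur r φ)^2) := by
      apply intervalIntegral.integral_mono_on hθ0.le
      · exact (by fun_prop : Continuous fun φ => ((deriv (fun ψ => ur r ψ) φ - uφ r φ)^2
          + (deriv (fun ψ => uφ r ψ) φ + ur r φ)^2)).intervalIntegrable 0 θ
      · exact (by fun_prop : Continuous fun φ =>
          ((r * deriv (fun s => ur s φ) r)^2 +
           (deriv (fun ψ => ur r ψ) φ - uφ r φ)^2 +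
           (r * deriv (fun s => uφ s φ) r)^2 +
           (deriv (fun ψ => uφ r ψ) φ + ur r φ)^2)).intervalIntegrable 0 θ
      · intro x _
        nlinarith [sq_nonneg (r * deriv (fun s => ur s x) r),
          sq_nonneg (r * deriv (fun s => uφ s x) r)]
    calc (∫ φ in Ioc (0:ℝ) θ, fL φ r)
        = (r ^ (-2*α - 2) * r) * ∫ φ in (0:ℝ)..θ, ((ur r φ)^2 + (uφ r φ)^2) := eL
      _ ≤ (r ^ (-2*α - 2) * r) * ((2*(π^2+θ^2)/(π^2-θ^2)^2*θ^2) *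
          ∫ φ in (0:ℝ)..θ, ((deriv (fun ψ => ur r ψ) φ - uφ r φ)^2
            + (deriv (fun ψ => uφ r ψ) φ + ur r φ)^2)) :=
          mul_le_mul_of_nonneg_left h2 hw
      _ ≤ (r ^ (-2*α - 2) * r) * ((2*(π^2+θ^2)/(π^2-θ^2)^2*θ^2) *
          ∫ φ in (0:ℝ)..θ,
          ((r * deriv (fun s => ur s φ) r)^2 +
           (deriv (fun ψ => ur r ψ) φ - uφ r φ)^2 +
           (r * deriv (fun s => uφ s φ) r)^2 +
           (deriv (fun ψ => uφ r ψ) φ + ur r φ)^2)) := by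
          apply mul_le_mul_of_nonneg_left _ hw
          apply mul_le_mul_of_nonneg_left h24 (by rw [hC_def] at hCnn; exact hCnn)
      _ = C * ((r ^ (-2*α - 2) * r) * ∫ φ in (0:ℝ)..θ,
          ((r * deriv (fun s => ur s φ) r)^2 +
           (deriv (fun ψ => ur r ψ) φ - uφ r φ)^2 +
           (r * deriv (fun s => uφ s φ) r)^2 +
           (deriv (fun ψ => uφ r ψ) φ + ur r φ)^2)) := by rw [hC_def]; ring
      _ = C * ∫ φ in Ioc (0:ℝ) θ, fR φ r := by rw [eR]
  -- Fubini and conclusion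
  have hL1 : Integrable (fun r => ∫ φ in Ioc (0:ℝ) θ, fL φ r) ν := hIntL.integral_prod_right
  have hR1 : Integrable (fun r => ∫ φ in Ioc (0:ℝ) θ, fR φ r) ν := hIntR.integral_prod_right
  have e1 : (∫ φ in (0:ℝ)..θ, ∫ r in Ioi (0:ℝ),
        r ^ (-2*α - 2) * ((ur r φ)^2 + (uφ r φ)^2) * r)
      = ∫ r in Ioi (0:ℝ), ∫ φ in Ioc (0:ℝ) θ, fL φ r := by
    rw [intervalIntegral.integral_of_le hθ0.le]
    exact integral_integral_swap hIntL
  have e2 : (∫ φ in (0:ℝ)..θ, ∫ r in Ioi (0:ℝ),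
        r ^ (-2*α - 2) *
          ((r * deriv (fun s => ur s φ) r)^2 +
           (deriv (fun ψ => ur r ψ) φ - uφ r φ)^2 +
           (r * deriv (fun s => uφ s φ) r)^2 +
           (deriv (fun ψ => uφ r ψ) φ + ur r φ)^2) * r)
      = ∫ r in Ioi (0:ℝ), ∫ φ in Ioc (0:ℝ) θ, fR φ r := by
    rw [intervalIntegral.integral_of_le hθ0.le]
    exact integral_integral_swap hIntR
  rw [e1, e2]
  have hfinal : (∫ r in Ioi (0:ℝ), ∫ φ in Ioc (0:ℝ) θ, fL φ r)
      ≤ C * ∫ r in Ioi (0:ℝ), ∫ φ in Ioc (0:ℝ) θ, fR φ r := by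
    calc (∫ r in Ioi (0:ℝ), ∫ φ in Ioc (0:ℝ) θ, fL φ r)
        ≤ ∫ r in Ioi (0:ℝ), C * ∫ φ in Ioc (0:ℝ) θ, fR φ r := by
          apply integral_mono_ae hL1 (hR1.const_mul C)
          exact (ae_restrict_mem measurableSet_Ioi).mono hmono
      _ = C * ∫ r in Ioi (0:ℝ), ∫ φ in Ioc (0:ℝ) θ, fR φ r := MeasureTheory.integral_const_mul C _
  exact hfinal
end

section
/- Let θ > 0 and λ ∈ ℂ with Re(λ)·θ ∉ πℤ. Then λ ≠ 0 and sin(λθ) ≠ 0, and for every continuous g : [0,θ] → ℂ and all w₀, w_θ ∈ ℂ, the function Φ(φ) := w₀·cos(λ(θ−φ))/(λ sin(λθ)) − w_θ·cos(λφ)/(λ sin(λθ)) + ∫₀^θ G(φ,φ̃,λ) g(φ̃) dφ̃, where G(φ,φ̃,λ) = cos(λφ̃)cos(λ(θ−φ))/(λ sin(λθ)) for 0 ≤ φ̃ < φ ≤ θ and G(φ,φ̃,λ) = cos(λ(θ−φ̃))cos(λφ)/(λ sin(λθ)) for 0 ≤ φ < φ̃ ≤ θ, is the unique twice continuously differentiable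 function on [0,θ] satisfying Φ''(φ) + λ²Φ(φ) = g(φ) for all φ ∈ (0,θ), Φ'(0) = w₀ and Φ'(θ) = w_θ. -/
/-!
The forcing is handled by variation of parameters with the pair `cos (λ x)`, `cos (λ (θ - x))`:
the first satisfies the Neumann condition at `0`, the second at `θ`, and their Wronskian is the
constant `λ sin (λ θ)`. Evaluating the resulting formula at the endpoints gives the boundary
data, and splitting the Green's function integral at `φ` recovers the formula.

For uniqueness, the difference `u` of two solutions solves the homogeneous problem, so its
Wronskians with `cos (λ x)` and `sin (λ x)` are constant. Using `u'(0) = 0` and `u'(θ) = 0`,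
both Wronskians vanish once `λ sin (λ θ) ≠ 0`, and `λ u` is a combination of them.
-/

open MeasureTheory Set intervalIntegral
open Complex (cos sin)

section SecondOrderLinear

variable {𝕜 𝔸 : Type*} [NontriviallyNormedField 𝕜] [NormedCommRing 𝔸] [NormedAlgebra 𝕜 𝔸]
  {c : 𝔸}

theorem HasDerivWithinAt.wronskian {f f' g g' : 𝕜 → 𝔸} {s : Set 𝕜} {x : 𝕜}
    (hf : HasDerivWithinAt f (f' x) s x) (hf' : HasDerivWithinAt f' (-c * f x) s x)
    (hg : HasDerivWithinAt g (g' x) s x) (hg' : HasDerivWithinAt g' (-c * g x) s x) :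
    HasDerivWithinAt (fun y => f y * g' y - f' y * g y) 0 s x :=
  ((hf.fun_mul hg').fun_sub (hf'.fun_mul hg)).congr_deriv (by ring)

variable {y₁ y₁' y₂ y₂' A B g : 𝕜 → 𝔸}

theorem hasDerivAt_variationOfParameters (hy₁ : ∀ x, HasDerivAt y₁ (y₁' x) x)
    (hy₂ : ∀ x, HasDerivAt y₂ (y₂' x) x) (hA : ∀ x, HasDerivAt A (y₁ x * g x) x)
    (hB : ∀ x, HasDerivAt B (-(y₂ x * g x)) x) (x : 𝕜) :
    HasDerivAt (fun y => y₂ y * A y + y₁ y * B y) (y₂' x * A x + y₁' x * B x) x :=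
  (((hy₂ x).fun_mul (hA x)).fun_add ((hy₁ x).fun_mul (hB x))).congr_deriv (by ring)

theorem hasDerivAt_variationOfParameters_deriv (hy₁' : ∀ x, HasDerivAt y₁' (-c * y₁ x) x)
    (hy₂' : ∀ x, HasDerivAt y₂' (-c * y₂ x) x) (hA : ∀ x, HasDerivAt A (y₁ x * g x) x)
    (hB : ∀ x, HasDerivAt B (-(y₂ x * g x)) x) (x : 𝕜) :
    HasDerivAt (fun y => y₂' y * A y + y₁' y * B y)
      (-c * (y₂ x * A x + y₁ x * B x) + (y₁ x * y₂' x - y₁' x * y₂ x) * g x) x :=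
  (((hy₂' x).fun_mul (hA x)).fun_add ((hy₁' x).fun_mul (hB x))).congr_deriv (by ring)

end SecondOrderLinear

theorem constant_of_hasDerivWithinAt_zero {E : Type*} [NormedAddCommGroup E] [NormedSpace ℝ E]
    {f : ℝ → E} {a b : ℝ} (hf : ∀ x ∈ Icc a b, HasDerivWithinAt f 0 (Icc a b) x) :
    ∀ x ∈ Icc a b, f x = f a :=
  constant_of_has_deriv_right_zero (fun x hx => (hf x hx).continuousWithinAt) fun x hx =>
    (hf x (Ico_subset_Icc_self hx)).mono_of_mem_nhdsWithin (Icc_mem_nhdsGE_of_mem hx)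

theorem intervalIntegral.integral_ite_lt {E : Type*} [NormedAddCommGroup E] [NormedSpace ℝ E]
    {f g : ℝ → E} {a b c : ℝ} (hab : a ≤ b) (hbc : b ≤ c)
    (hf : IntervalIntegrable f volume a b) (hg : IntervalIntegrable g volume b c) :
    ∫ t in a..c, (if t < b then f t else g t) = (∫ t in a..b, f t) + ∫ t in b..c, g t := by
  have hfEq : EqOn f (fun t => if t < b then f t else g t) (Ioo a b) :=
    fun t ht => (if_pos ht.2).symm
  have hgEq : EqOn g (fun t => if t < b then f t else g t) (Ioo b c) :=
    fun t ht => (if_neg ht.1.not_gt).symm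
  rw [← integral_add_adjacent_intervals (b := b)
      (hf.congr_uIoo (by rwa [uIoo_of_le hab])) (hg.congr_uIoo (by rwa [uIoo_of_le hbc])),
    integral_congr_Ioo_of_le hab hfEq, integral_congr_Ioo_of_le hbc hgEq]

theorem Complex.sin_ne_zero_of_re_ne {z : ℂ} (hz : ∀ k : ℤ, z.re ≠ k * Real.pi) : sin z ≠ 0 := by
  rw [Ne, Complex.sin_eq_zero_iff]
  rintro ⟨k, rfl⟩
  exact hz k (by simp)

section Trigonometric

variable (a : ℂ) (θ x : ℝ)

theorem hasDerivAt_cos_mul_ofReal :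
    HasDerivAt (fun y : ℝ => cos (a * y)) (-(a * sin (a * x))) x :=
  ((Complex.hasDerivAt_cos _).comp x
    ((hasDerivAt_id' x).ofReal_comp.const_mul a)).congr_deriv (by push_cast; ring)

theorem hasDerivAt_sin_mul_ofReal :
    HasDerivAt (fun y : ℝ => sin (a * y)) (a * cos (a * x)) x :=
  ((Complex.hasDerivAt_sin _).comp x
    ((hasDerivAt_id' x).ofReal_comp.const_mul a)).congr_deriv (by push_cast; ring)

theorem hasDerivAt_neg_mul_sin_mul_ofReal :
    HasDerivAt (fun y : ℝ => -(a * sin (a * y))) (-a ^ 2 * cos (a * x)) x :=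
  ((hasDerivAt_sin_mul_ofReal a x).const_mul a).neg.congr_deriv (by ring)

theorem hasDerivAt_mul_cos_mul_ofReal :
    HasDerivAt (fun y : ℝ => a * cos (a * y)) (-a ^ 2 * sin (a * x)) x :=
  ((hasDerivAt_cos_mul_ofReal a x).const_mul a).congr_deriv (by ring)

theorem hasDerivAt_cos_mul_ofReal_sub :
    HasDerivAt (fun y : ℝ => cos (a * ↑(θ - y))) (a * sin (a * ↑(θ - x))) x :=
  ((Complex.hasDerivAt_cos _).comp x
    (((hasDerivAt_id' x).const_sub θ).ofReal_comp.const_mul a)).congr_deriv (by push_cast; ring)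

theorem hasDerivAt_mul_sin_mul_ofReal_sub :
    HasDerivAt (fun y : ℝ => a * sin (a * ↑(θ - y))) (-a ^ 2 * cos (a * ↑(θ - x))) x :=
  (((Complex.hasDerivAt_sin _).comp x
    (((hasDerivAt_id' x).const_sub θ).ofReal_comp.const_mul a)).const_mul a).congr_deriv
    (by push_cast; ring)

theorem cos_mul_wronskian_cos_mul_sub :
    cos (a * x) * (a * sin (a * ↑(θ - x))) - -(a * sin (a * x)) * cos (a * ↑(θ - x)) =
      a * sin (a * θ) := by
  rw [show a * (θ : ℂ) = a * x + a * ↑(θ - x) by push_cast; ring, Complex.sin_add]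
  ring

end Trigonometric

def IsNeumannSolution (θ : ℝ) (lam : ℂ) (g : ℝ → ℂ) (w₀ wθ : ℂ) (Φ : ℝ → ℂ) : Prop :=
  ContDiffOn ℝ 2 Φ (Icc 0 θ) ∧
    (∀ φ ∈ Ioo (0:ℝ) θ,
      derivWithin (derivWithin Φ (Icc 0 θ)) (Icc 0 θ) φ + lam ^ 2 * Φ φ = g φ) ∧
    derivWithin Φ (Icc 0 θ) 0 = w₀ ∧ derivWithin Φ (Icc 0 θ) θ = wθ

namespace IsNeumannSolution

variable {θ : ℝ} {lam : ℂ}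

theorem congr {g : ℝ → ℂ} {w₀ wθ : ℂ} {Φ Ψ : ℝ → ℂ} (hθ : 0 ≤ θ)
    (hΦ : IsNeumannSolution θ lam g w₀ wθ Φ) (hΨ : EqOn Ψ Φ (Icc 0 θ)) :
    IsNeumannSolution θ lam g w₀ wθ Ψ := by
  obtain ⟨hcd, hode, h0, hθ'⟩ := hΦ
  have hd : EqOn (derivWithin Ψ (Icc 0 θ)) (derivWithin Φ (Icc 0 θ)) (Icc 0 θ) :=
    fun x hx => derivWithin_congr hΨ (hΨ hx)
  refine ⟨hcd.congr hΨ, fun φ hφ => ?_, ?_, ?_⟩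
  · rw [derivWithin_congr hd (hd (Ioo_subset_Icc_self hφ)), hΨ (Ioo_subset_Icc_self hφ)]
    exact hode φ hφ
  · rw [hd (left_mem_Icc.2 hθ), h0]
  · rw [hd (right_mem_Icc.2 hθ), hθ']

theorem sub {g₁ g₂ : ℝ → ℂ} {a₁ a₂ b₁ b₂ : ℂ} {Φ Ψ : ℝ → ℂ} (hθ : 0 < θ)
    (hΦ : IsNeumannSolution θ lam g₁ a₁ b₁ Φ) (hΨ : IsNeumannSolution θ lam g₂ a₂ b₂ Ψ) :
    IsNeumannSolution θ lam (g₁ - g₂) (a₁ - a₂) (b₁ - b₂) (Φ - Ψ) := by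
  obtain ⟨hΦcd, hΦode, hΦ0, hΦθ⟩ := hΦ
  obtain ⟨hΨcd, hΨode, hΨ0, hΨθ⟩ := hΨ
  have hs : UniqueDiffOn ℝ (Icc 0 θ) := uniqueDiffOn_Icc hθ
  have hd : EqOn (derivWithin (Φ - Ψ) (Icc 0 θ))
      (derivWithin Φ (Icc 0 θ) - derivWithin Ψ (Icc 0 θ)) (Icc 0 θ) := fun x hx =>
    derivWithin_sub ((hΦcd.differentiableOn two_ne_zero) x hx)
      ((hΨcd.differentiableOn two_ne_zero) x hx)
  have hΦ' := (hΦcd.derivWithin hs (m := 1) le_rfl).differentiableOn one_ne_zero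
  have hΨ' := (hΨcd.derivWithin hs (m := 1) le_rfl).differentiableOn one_ne_zero
  refine ⟨hΦcd.sub hΨcd, fun φ hφ => ?_, ?_, ?_⟩
  · have hφ' := Ioo_subset_Icc_self hφ
    rw [derivWithin_congr hd (hd hφ'), derivWithin_sub (hΦ' φ hφ') (hΨ' φ hφ'), Pi.sub_apply,
      Pi.sub_apply, ← hΦode φ hφ, ← hΨode φ hφ]
    ring
  · rw [hd (left_mem_Icc.2 hθ.le), Pi.sub_apply, hΦ0, hΨ0]
  · rw [hd (right_mem_Icc.2 hθ.le), Pi.sub_apply, hΦθ, hΨθ]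

theorem hasDerivWithinAt_derivWithin {u : ℝ → ℂ} {w₀ wθ : ℂ} (hθ : 0 < θ)
    (hu : IsNeumannSolution θ lam 0 w₀ wθ u) {x : ℝ} (hx : x ∈ Icc 0 θ) :
    HasDerivWithinAt (derivWithin u (Icc 0 θ)) (-lam ^ 2 * u x) (Icc 0 θ) x := by
  obtain ⟨hcd, hode, -, -⟩ := hu
  have hs : UniqueDiffOn ℝ (Icc 0 θ) := uniqueDiffOn_Icc hθ
  have hcd' : ContDiffOn ℝ 1 (derivWithin u (Icc 0 θ)) (Icc 0 θ) := hcd.derivWithin hs le_rfl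
  -- the equation extends from the interior to the endpoints by continuity
  have hx' : derivWithin (derivWithin u (Icc 0 θ)) (Icc 0 θ) x + lam ^ 2 * u x = 0 :=
    EqOn.of_subset_closure hode
      ((hcd'.continuousOn_derivWithin hs le_rfl).add (continuousOn_const.mul hcd.continuousOn))
      continuousOn_const Ioo_subset_Icc_self (closure_Ioo hθ.ne).ge hx
  exact ((hcd'.differentiableOn one_ne_zero) x hx).hasDerivWithinAt.congr_deriv
    (by linear_combination hx')

theorem eqOn_zero {u : ℝ → ℂ} (hθ : 0 < θ) (hlam : lam ≠ 0) (hsin : sin (lam * θ) ≠ 0)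
    (hu : IsNeumannSolution θ lam 0 0 0 u) : EqOn u 0 (Icc 0 θ) := by
  have hu2 := fun x (hx : x ∈ Icc 0 θ) => hu.hasDerivWithinAt_derivWithin hθ hx
  obtain ⟨hcd, -, h0, hθ'⟩ := hu
  set s := Icc 0 θ
  set u' := derivWithin u s
  have hu1 : ∀ x ∈ s, HasDerivWithinAt u (u' x) s x := fun x hx =>
    ((hcd.differentiableOn two_ne_zero) x hx).hasDerivWithinAt
  set p := fun y => u y * -(lam * sin (lam * y)) - u' y * cos (lam * y) with hp_def
  set q := fun y => u y * (lam * cos (lam * y)) - u' y * sin (lam * y) with hq_def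
  have hp : ∀ x ∈ s, p x = p 0 := constant_of_hasDerivWithinAt_zero fun x hx =>
    (hu1 x hx).wronskian (hu2 x hx) (hasDerivAt_cos_mul_ofReal lam x).hasDerivWithinAt
      (hasDerivAt_neg_mul_sin_mul_ofReal lam x).hasDerivWithinAt
  have hq : ∀ x ∈ s, q x = q 0 := constant_of_hasDerivWithinAt_zero fun x hx =>
    (hu1 x hx).wronskian (hu2 x hx) (hasDerivAt_sin_mul_ofReal lam x).hasDerivWithinAt
      (hasDerivAt_mul_cos_mul_ofReal lam x).hasDerivWithinAt
  have hθs : θ ∈ s := right_mem_Icc.2 hθ.le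
  have huθ : u θ = 0 := by simpa [hp_def, u', hθ', h0, hlam, hsin] using hp θ hθs
  intro x hx
  have hpx : p x = 0 := by
    rw [hp x hx, hp_def]
    simp [u', h0]
  have hqx : q x = 0 := by
    rw [hq x hx, ← hq θ hθs, hq_def]
    simp [u', hθ', huθ]
  have hkey : lam * u x = q x * cos (lam * x) - p x * sin (lam * x) := by
    rw [hp_def, hq_def]
    linear_combination (-lam * u x) * Complex.sin_sq_add_cos_sq (lam * x)
  rw [hpx, hqx, zero_mul, zero_mul, sub_zero] at hkey
  exact (mul_eq_zero.1 hkey).resolve_left hlam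

theorem eqOn {g : ℝ → ℂ} {w₀ wθ : ℂ} {Φ Ψ : ℝ → ℂ} (hθ : 0 < θ) (hlam : lam ≠ 0)
    (hsin : sin (lam * θ) ≠ 0) (hΦ : IsNeumannSolution θ lam g w₀ wθ Φ)
    (hΨ : IsNeumannSolution θ lam g w₀ wθ Ψ) : EqOn Φ Ψ (Icc 0 θ) := fun x hx => by
  have hdiff := hΦ.sub hθ hΨ
  rw [sub_self, sub_self, sub_self] at hdiff
  exact sub_eq_zero.1 (hdiff.eqOn_zero hθ hlam hsin hx)

end IsNeumannSolution

theorem isNeumannSolution_of_hasDerivAt {θ : ℝ} {lam : ℂ} {g : ℝ → ℂ} {w₀ wθ : ℂ}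
    {f f' : ℝ → ℂ} (hθ : 0 < θ) (hg : ContinuousOn g (Icc 0 θ))
    (hf : ∀ x ∈ Icc 0 θ, HasDerivAt f (f' x) x)
    (hf' : ∀ x ∈ Icc 0 θ, HasDerivAt f' (g x - lam ^ 2 * f x) x)
    (h0 : f' 0 = w₀) (hθ' : f' θ = wθ) : IsNeumannSolution θ lam g w₀ wθ f := by
  have hs : UniqueDiffOn ℝ (Icc 0 θ) := uniqueDiffOn_Icc hθ
  have hd : EqOn (derivWithin f (Icc 0 θ)) f' (Icc 0 θ) := fun x hx =>
    (hf x hx).hasDerivWithinAt.derivWithin (hs x hx)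
  have hd' : EqOn (derivWithin f' (Icc 0 θ)) (fun x => g x - lam ^ 2 * f x) (Icc 0 θ) :=
    fun x hx => (hf' x hx).hasDerivWithinAt.derivWithin (hs x hx)
  have hfc : ContinuousOn f (Icc 0 θ) := fun x hx => (hf x hx).continuousAt.continuousWithinAt
  have hcd' : ContDiffOn ℝ 1 f' (Icc 0 θ) := (contDiffOn_one_iff_derivWithin hs).2
    ⟨fun x hx => (hf' x hx).differentiableAt.differentiableWithinAt,
      (hg.sub (continuousOn_const.mul hfc)).congr hd'⟩
  refine ⟨(contDiffOn_succ_iff_derivWithin (n := 1) hs).2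
      ⟨fun x hx => (hf x hx).differentiableAt.differentiableWithinAt, by simp, hcd'.congr hd⟩,
    fun φ hφ => ?_, (hd (left_mem_Icc.2 hθ.le)).trans h0, (hd (right_mem_Icc.2 hθ.le)).trans hθ'⟩
  have hφ' := Ioo_subset_Icc_self hφ
  rw [derivWithin_congr hd (hd hφ'), hd' hφ', sub_add_cancel]

section GreenSolution

variable (θ : ℝ) (lam : ℂ) (g : ℝ → ℂ) (w₀ wθ : ℂ)

noncomputable def greenSolution (x : ℝ) : ℂ :=
  (cos (lam * ↑(θ - x)) * (w₀ + ∫ t in (0:ℝ)..x, cos (lam * t) * g t) +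
    cos (lam * x) * ((∫ t in x..θ, cos (lam * ↑(θ - t)) * g t) - wθ)) / (lam * sin (lam * θ))

noncomputable def greenSolutionDeriv (x : ℝ) : ℂ :=
  (lam * sin (lam * ↑(θ - x)) * (w₀ + ∫ t in (0:ℝ)..x, cos (lam * t) * g t) +
    -(lam * sin (lam * x)) * ((∫ t in x..θ, cos (lam * ↑(θ - t)) * g t) - wθ)) /
    (lam * sin (lam * θ))

noncomputable def greenKernel (φ t : ℝ) : ℂ :=
  if t < φ then
    cos (lam * (t : ℂ)) * cos (lam * ((θ - φ : ℝ) : ℂ)) / (lam * sin (lam * θ))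
  else
    cos (lam * ((θ - t : ℝ) : ℂ)) * cos (lam * (φ : ℂ)) / (lam * sin (lam * θ))

variable {θ lam g}

theorem hasDerivAt_greenSolution (hg : Continuous g) (hsin : lam * sin (lam * θ) ≠ 0) (x : ℝ) :
    HasDerivAt (greenSolution θ lam g w₀ wθ) (greenSolutionDeriv θ lam g w₀ wθ x) x ∧
      HasDerivAt (greenSolutionDeriv θ lam g w₀ wθ)
        (g x - lam ^ 2 * greenSolution θ lam g w₀ wθ x) x := by
  have hA (x : ℝ) : HasDerivAt (fun y => w₀ + ∫ t in (0:ℝ)..y, cos (lam * t) * g t)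
      (cos (lam * x) * g x) x :=
    (Continuous.integral_hasStrictDerivAt (by fun_prop) 0 x).hasDerivAt.const_add w₀
  have hBc : Continuous fun t : ℝ => cos (lam * ↑(θ - t)) * g t := by fun_prop
  have hB (x : ℝ) : HasDerivAt (fun y => (∫ t in y..θ, cos (lam * ↑(θ - t)) * g t) - wθ)
      (-(cos (lam * ↑(θ - x)) * g x)) x :=
    (integral_hasDerivAt_left (hBc.intervalIntegrable _ _) (hBc.stronglyMeasurableAtFilter _ _)
      hBc.continuousAt).sub_const wθ
  refine ⟨(hasDerivAt_variationOfParameters (hasDerivAt_cos_mul_ofReal lam)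
    (hasDerivAt_cos_mul_ofReal_sub lam θ) hA hB x).div_const _, ?_⟩
  refine ((hasDerivAt_variationOfParameters_deriv (hasDerivAt_neg_mul_sin_mul_ofReal lam)
    (hasDerivAt_mul_sin_mul_ofReal_sub lam θ) hA hB x).div_const _).congr_deriv ?_
  rw [cos_mul_wronskian_cos_mul_sub, add_div, mul_div_cancel_left₀ _ hsin, greenSolution]
  ring

theorem greenSolutionDeriv_zero (hsin : lam * sin (lam * θ) ≠ 0) :
    greenSolutionDeriv θ lam g w₀ wθ 0 = w₀ := by
  simp [greenSolutionDeriv, hsin]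

theorem greenSolutionDeriv_self (hsin : lam * sin (lam * θ) ≠ 0) :
    greenSolutionDeriv θ lam g w₀ wθ θ = wθ := by
  simp [greenSolutionDeriv, hsin]

theorem greenSolution_eq_add_integral_greenKernel (hg : Continuous g) {φ : ℝ}
    (hφ : φ ∈ Icc 0 θ) :
    greenSolution θ lam g w₀ wθ φ =
      w₀ * cos (lam * ↑(θ - φ)) / (lam * sin (lam * θ)) -
        wθ * cos (lam * φ) / (lam * sin (lam * θ)) +
        ∫ t in (0:ℝ)..θ, greenKernel θ lam φ t * g t := by
  simp only [greenKernel, ite_mul]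
  rw [integral_ite_lt hφ.1 hφ.2 (Continuous.intervalIntegrable (by fun_prop) _ _)
    (Continuous.intervalIntegrable (by fun_prop) _ _)]
  have hpull (a b : ℝ) (c : ℂ) (f : ℝ → ℂ) :
      ∫ t in a..b, f t * c / (lam * sin (lam * θ)) * g t =
        c / (lam * sin (lam * θ)) * ∫ t in a..b, f t * g t := by
    rw [← intervalIntegral.integral_const_mul]
    exact integral_congr fun t _ => by ring
  rw [hpull, hpull _ _ _ fun t => cos (lam * ↑(θ - t)), greenSolution]
  ring

end GreenSolution

/-- Green's function representation of the unique solution of the Mellin-transformed Neumann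
problem `Φ'' + λ²Φ = g` on `(0,θ)` with `Φ'(0) = w₀`, `Φ'(θ) = w_θ`, when `Re(λ)·θ ∉ πℤ`. -/
theorem helmholtz_green_representation (θ : ℝ) (hθ : 0 < θ) (lam : ℂ)
    (hres : ∀ k : ℤ, lam.re * θ ≠ k * Real.pi) :
    lam ≠ 0 ∧ Complex.sin (lam * θ) ≠ 0 ∧
    ∀ g : ℝ → ℂ, ContinuousOn g (Icc 0 θ) → ∀ w₀ wθ : ℂ,
    ∀ Φ : ℝ → ℂ,
      (∀ φ : ℝ, Φ φ =
        w₀ * Complex.cos (lam * ((θ - φ : ℝ) : ℂ)) / (lam * Complex.sin (lam * θ))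
        - wθ * Complex.cos (lam * (φ : ℂ)) / (lam * Complex.sin (lam * θ))
        + ∫ t in (0:ℝ)..θ,
            (if t < φ then
              Complex.cos (lam * (t : ℂ)) * Complex.cos (lam * ((θ - φ : ℝ) : ℂ))
                / (lam * Complex.sin (lam * θ))
            else
              Complex.cos (lam * ((θ - t : ℝ) : ℂ)) * Complex.cos (lam * (φ : ℂ))
                / (lam * Complex.sin (lam * θ))) * g t) →
      (ContDiffOn ℝ 2 Φ (Icc 0 θ) ∧
        (∀ φ ∈ Ioo (0:ℝ) θ,
          derivWithin (derivWithin Φ (Icc 0 θ)) (Icc 0 θ) φ + lam^2 * Φ φ = g φ) ∧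
        derivWithin Φ (Icc 0 θ) 0 = w₀ ∧ derivWithin Φ (Icc 0 θ) θ = wθ) ∧
      ∀ Ψ : ℝ → ℂ,
        (ContDiffOn ℝ 2 Ψ (Icc 0 θ) ∧
          (∀ φ ∈ Ioo (0:ℝ) θ,
            derivWithin (derivWithin Ψ (Icc 0 θ)) (Icc 0 θ) φ + lam^2 * Ψ φ = g φ) ∧
          derivWithin Ψ (Icc 0 θ) 0 = w₀ ∧ derivWithin Ψ (Icc 0 θ) θ = wθ) →
        EqOn Ψ Φ (Icc 0 θ) := by
  have hsin : sin (lam * θ) ≠ 0 := Complex.sin_ne_zero_of_re_ne (by simpa using hres)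
  have hlam : lam ≠ 0 := by rintro rfl; simp at hsin
  have hW : lam * sin (lam * θ) ≠ 0 := mul_ne_zero hlam hsin
  refine ⟨hlam, hsin, fun g hg w₀ wθ Φ hΦ => ?_⟩
  -- a continuous extension of `g` makes the Green solution differentiable at the endpoints
  set ĝ := IccExtend hθ.le ((Icc 0 θ).domRestrict g)
  have hĝ : Continuous ĝ := hg.domRestrict.Icc_extend'
  have hĝg : EqOn ĝ g (Icc 0 θ) := fun x hx => IccExtend_of_mem _ _ hx
  have hH : IsNeumannSolution θ lam g w₀ wθ (greenSolution θ lam ĝ w₀ wθ) :=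
    isNeumannSolution_of_hasDerivAt hθ hg (fun x _ => (hasDerivAt_greenSolution w₀ wθ hĝ hW x).1)
      (fun x hx => hĝg hx ▸ (hasDerivAt_greenSolution w₀ wθ hĝ hW x).2)
      (greenSolutionDeriv_zero w₀ wθ hW) (greenSolutionDeriv_self w₀ wθ hW)
  have hΦH : EqOn Φ (greenSolution θ lam ĝ w₀ wθ) (Icc 0 θ) := fun φ hφ => by
    rw [hΦ φ, greenSolution_eq_add_integral_greenKernel w₀ wθ hĝ hφ]
    refine congrArg (_ + ·) (integral_congr fun t ht => ?_)
    rw [uIcc_of_le hθ.le] at ht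
    simp only [greenKernel, hĝg ht]
  have hΦ_sol := hH.congr hθ.le hΦH
  exact ⟨hΦ_sol, fun Ψ hΨ => IsNeumannSolution.eqOn hθ hlam hsin hΨ hΦ_sol⟩
end

section
/- Let θ ∈ (0,π) and φ, φ' ∈ [0,θ] with φ' ≤ φ. Set Σ := {λ ∈ ℂ : (|Re λ| + 1)θ < π}. Then for every λ ∈ Σ \ {−1,0,1} the quantities (λ−1)λ sin((λ−1)θ) and (λ+1)λ sin((λ+1)θ) are nonzero, and there exists a function H : ℂ → ℂ that is holomorphic on Σ and satisfies H(λ) = sin((λ−1)(θ−φ))sin((λ−1)φ')/(4(λ−1)λ sin((λ−1)θ)) − sin((λ+1)(θ−φ))sin((λ+1)φ')/(4(λ+1)λ sin((λ+1)θ)) for every λ ∈ Σ \ {−1,0,1}. -/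
open Set

/-- `gSinc c z = sin (c * z) / z`, extended holomorphically across `z = 0` by `c`. -/
noncomputable def gSinc (c : ℂ) : ℂ → ℂ := dslope (fun z => Complex.sin (c * z)) 0

lemma gSinc_apply_ne (c : ℂ) {z : ℂ} (hz : z ≠ 0) : gSinc c z = Complex.sin (c * z) / z := by
  rw [gSinc, dslope_of_ne _ hz, slope_def_field]
  simp

lemma gSinc_zero (c : ℂ) : gSinc c 0 = c := by
  have h : HasDerivAt (fun z => Complex.sin (c * z)) c 0 := by
    simpa using ((hasDerivAt_id (0:ℂ)).const_mul c).csin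
  rw [gSinc, dslope_same, h.deriv]

lemma entire_sin_mul (c : ℂ) : Differentiable ℂ (fun z => Complex.sin (c * z)) :=
  Complex.differentiable_sin.comp ((differentiable_id).const_mul c)

lemma analyticAt_dslope_of_analyticAt {f : ℂ → ℂ} {z₀ : ℂ} (h : AnalyticAt ℂ f z₀) :
    AnalyticAt ℂ (dslope f z₀) z₀ := by
  obtain ⟨p, hp⟩ := h
  exact ⟨p.fslope, hp.has_fpower_series_dslope_fslope⟩

lemma gSinc_differentiable (c : ℂ) : Differentiable ℂ (gSinc c) := by
  intro z
  rcases eq_or_ne z 0 with rfl | hz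
  · exact (analyticAt_dslope_of_analyticAt ((entire_sin_mul c).analyticAt 0)).differentiableAt
  · exact (differentiableAt_dslope_of_ne hz).mpr ((entire_sin_mul c) z)

/-- nonvanishing of `sin (θ w)` for `w ≠ 0` with `|Re w| θ < π`. -/
lemma sin_mul_ne_zero_of_strip {θ : ℝ} (hθ : 0 < θ) {w : ℂ} (hw : w ≠ 0)
    (h : |w.re| * θ < Real.pi) : Complex.sin (w * θ) ≠ 0 := by
  intro h0
  rw [Complex.sin_eq_zero_iff] at h0
  obtain ⟨k, hk⟩ := h0
  have him : w.im * θ = 0 := by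
    have := congrArg Complex.im hk
    simpa using this
  have him0 : w.im = 0 := by
    rcases mul_eq_zero.mp him with h | h
    · exact h
    · exact absurd h hθ.ne'
  have hre : w.re * θ = k * Real.pi := by
    have := congrArg Complex.re hk
    simpa using this
  have hk0 : k = 0 := by
    by_contra hk0
    have h1 : (1 : ℝ) ≤ |(k : ℝ)| := by
      have : (1 : ℤ) ≤ |k| := Int.one_le_abs hk0
      exact_mod_cast this
    have : Real.pi ≤ |(k : ℝ)| * Real.pi :=
      le_mul_of_one_le_left Real.pi_pos.le h1
    have h2 : |w.re * θ| < Real.pi := by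
      rwa [abs_mul, abs_of_pos hθ]
    rw [hre, abs_mul, abs_of_pos Real.pi_pos] at h2
    linarith
  have hre0 : w.re = 0 := by
    rw [hk0] at hre
    simpa [hθ.ne'] using hre
  exact hw (Complex.ext hre0 him0)

/-- Holomorphic extension in `λ` of the Green's function `G(λ,φ,φ')` (for `φ' ≤ φ`)
of the fourth-order operator `∂_φ⁴ + 2(λ²+1)∂_φ² + (λ²−1)²` across the points `−1, 0, 1`
to the strip `Σ = {λ : (|Re λ| + 1)θ < π}`. -/
theorem green_holomorphic_extension (θ : ℝ) (hθ : θ ∈ Ioo (0:ℝ) Real.pi)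
    (φ φ' : ℝ) (hφ : φ ∈ Icc (0:ℝ) θ) (hφ' : φ' ∈ Icc (0:ℝ) θ) (hle : φ' ≤ φ) :
    (∀ lam ∈ {l : ℂ | (|l.re| + 1) * θ < Real.pi} \ ({-1, 0, 1} : Set ℂ),
      (lam - 1) * lam * Complex.sin ((lam - 1) * θ) ≠ 0 ∧
      (lam + 1) * lam * Complex.sin ((lam + 1) * θ) ≠ 0) ∧
    ∃ H : ℂ → ℂ, DifferentiableOn ℂ H {l : ℂ | (|l.re| + 1) * θ < Real.pi} ∧
      ∀ lam ∈ {l : ℂ | (|l.re| + 1) * θ < Real.pi} \ ({-1, 0, 1} : Set ℂ),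
        H lam =
          Complex.sin ((lam - 1) * ((θ - φ : ℝ) : ℂ)) * Complex.sin ((lam - 1) * (φ' : ℂ)) /
            (4 * (lam - 1) * lam * Complex.sin ((lam - 1) * θ))
          - Complex.sin ((lam + 1) * ((θ - φ : ℝ) : ℂ)) * Complex.sin ((lam + 1) * (φ' : ℂ)) /
            (4 * (lam + 1) * lam * Complex.sin ((lam + 1) * θ)) := by
  obtain ⟨hθ0, hθπ⟩ := hθ
  set S : Set ℂ := {l : ℂ | (|l.re| + 1) * θ < Real.pi} with hS
  -- nonvanishing of sin((l ∓ 1) θ) on the strip away from ±1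
  have key : ∀ l ∈ S, ∀ ε : ℂ, ε.im = 0 → |ε.re| ≤ 1 → l + ε ≠ 0 →
      Complex.sin ((l + ε) * θ) ≠ 0 := by
    intro l hl ε hεim hεre hne
    apply sin_mul_ne_zero_of_strip hθ0 hne
    have h1 : |(l + ε).re| ≤ |l.re| + 1 := by
      rw [Complex.add_re]
      calc |l.re + ε.re| ≤ |l.re| + |ε.re| := abs_add_le _ _
        _ ≤ |l.re| + 1 := by linarith
    calc |(l + ε).re| * θ ≤ (|l.re| + 1) * θ := by
          exact mul_le_mul_of_nonneg_right h1 hθ0.le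
      _ < Real.pi := hl
  have mem_simp : ∀ lam : ℂ, lam ∈ S \ ({-1, 0, 1} : Set ℂ) →
      lam ∈ S ∧ lam ≠ -1 ∧ lam ≠ 0 ∧ lam ≠ 1 := by
    intro lam hlam
    refine ⟨hlam.1, ?_, ?_, ?_⟩ <;>
      · intro h; exact hlam.2 (by simp [h])
  have keym : ∀ lam : ℂ, lam ∈ S → lam ≠ 1 → Complex.sin ((lam - 1) * θ) ≠ 0 := by
    intro lam hl h1
    have := key lam hl (-1) (by simp) (by simp) (by
      intro h; apply h1; linear_combination h)
    simpa [sub_eq_add_neg] using this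
  have keyp : ∀ lam : ℂ, lam ∈ S → lam ≠ -1 → Complex.sin ((lam + 1) * θ) ≠ 0 := by
    intro lam hl h1
    exact key lam hl 1 (by simp) (by simp) (by
      intro h; apply h1; linear_combination h)
  have part1 : ∀ lam ∈ S \ ({-1, 0, 1} : Set ℂ),
      (lam - 1) * lam * Complex.sin ((lam - 1) * θ) ≠ 0 ∧
      (lam + 1) * lam * Complex.sin ((lam + 1) * θ) ≠ 0 := by
    intro lam hlam
    obtain ⟨hl, hm1, h0, h1⟩ := mem_simp lam hlam
    constructor
    · exact mul_ne_zero (mul_ne_zero (sub_ne_zero.mpr h1) h0) (keym lam hl h1)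
    · exact mul_ne_zero (mul_ne_zero (fun h => hm1 (by linear_combination h)) h0)
        (keyp lam hl hm1)
  refine ⟨part1, ?_⟩
  set a : ℂ := ((θ - φ : ℝ) : ℂ) with ha
  set b : ℂ := ((φ' : ℝ) : ℂ) with hb
  -- nonvanishing of gSinc θ (lam ∓ 1) on all of S
  have gm : ∀ lam ∈ S, gSinc θ (lam - 1) ≠ 0 := by
    intro lam hl
    rcases eq_or_ne lam 1 with rfl | h1
    · rw [show (1:ℂ) - 1 = 0 by ring, gSinc_zero]
      exact_mod_cast hθ0.ne'
    · rw [gSinc_apply_ne _ (sub_ne_zero.mpr h1)]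
      exact div_ne_zero (by rw [mul_comm]; exact keym lam hl h1) (sub_ne_zero.mpr h1)
  have gp : ∀ lam ∈ S, gSinc θ (lam + 1) ≠ 0 := by
    intro lam hl
    rcases eq_or_ne lam (-1) with rfl | h1
    · rw [show (-1:ℂ) + 1 = 0 by ring, gSinc_zero]
      exact_mod_cast hθ0.ne'
    · have hne : lam + 1 ≠ 0 := fun h => h1 (by linear_combination h)
      rw [gSinc_apply_ne _ hne]
      exact div_ne_zero (by rw [mul_comm]; exact keyp lam hl h1) hne
  -- the regularized combination K
  set K : ℂ → ℂ := fun l =>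
    gSinc a (l - 1) * gSinc b (l - 1) / gSinc θ (l - 1)
      - gSinc a (l + 1) * gSinc b (l + 1) / gSinc θ (l + 1) with hK
  have hSopen : IsOpen S := by
    have : S = (fun l : ℂ => (|l.re| + 1) * θ) ⁻¹' (Iio Real.pi) := rfl
    rw [this]
    apply IsOpen.preimage _ isOpen_Iio
    exact (((continuous_abs.comp Complex.continuous_re).add continuous_const).mul
      continuous_const)
  have hKdiff : DifferentiableOn ℂ K S := by
    apply DifferentiableOn.sub
    · apply DifferentiableOn.div
      · exact (((gSinc_differentiable a).comp (differentiable_id.sub_const 1)).mul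
          ((gSinc_differentiable b).comp (differentiable_id.sub_const 1))).differentiableOn
      · exact ((gSinc_differentiable θ).comp (differentiable_id.sub_const 1)).differentiableOn
      · exact gm
    · apply DifferentiableOn.div
      · exact (((gSinc_differentiable a).comp (differentiable_id.add_const 1)).mul
          ((gSinc_differentiable b).comp (differentiable_id.add_const 1))).differentiableOn
      · exact ((gSinc_differentiable θ).comp (differentiable_id.add_const 1)).differentiableOn
      · exact gp
  have hK0 : K 0 = 0 := by
    have e1 : ∀ c : ℂ, gSinc c (-1 : ℂ) = Complex.sin c := by
      intro c
      rw [gSinc_apply_ne c (by norm_num : (-1:ℂ) ≠ 0)]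
      simp
    have e2 : ∀ c : ℂ, gSinc c (1 : ℂ) = Complex.sin c := by
      intro c
      rw [gSinc_apply_ne c (by norm_num : (1:ℂ) ≠ 0)]
      simp
    simp [hK, e1, e2]
  refine ⟨fun l => dslope K 0 l / 4, ?_, ?_⟩
  · apply DifferentiableOn.div_const
    intro z hz
    rcases eq_or_ne z 0 with rfl | hz0
    · have hKanal : AnalyticAt ℂ K 0 :=
        hKdiff.analyticAt (hSopen.mem_nhds hz)
      exact (analyticAt_dslope_of_analyticAt hKanal).differentiableAt.differentiableWithinAt
    · exact ((differentiableWithinAt_dslope_of_ne hz0).mpr (hKdiff z hz))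
  · intro lam hlam
    obtain ⟨hl, hm1, h0, h1⟩ := mem_simp lam hlam
    have hm1' : lam + 1 ≠ 0 := fun h => hm1 (by linear_combination h)
    have h1' : lam - 1 ≠ 0 := sub_ne_zero.mpr h1
    have sθm := keym lam hl h1
    have sθp := keyp lam hl hm1
    have sθm' : Complex.sin ((θ:ℂ) * (lam - 1)) ≠ 0 := by rw [mul_comm]; exact sθm
    have sθp' : Complex.sin ((θ:ℂ) * (lam + 1)) ≠ 0 := by rw [mul_comm]; exact sθp
    show dslope K 0 lam / 4 = _
    rw [dslope_of_ne _ h0, slope_def_field, hK0]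
    simp only [hK, sub_zero]
    rw [gSinc_apply_ne a h1', gSinc_apply_ne b h1', gSinc_apply_ne θ h1',
      gSinc_apply_ne a hm1', gSinc_apply_ne b hm1', gSinc_apply_ne θ hm1']
    rw [sub_div, sub_div]
    have comb : ∀ w s1 s2 s3 : ℂ, w ≠ 0 → s3 ≠ 0 →
        s1 / w * (s2 / w) / (s3 / w) / lam / 4 = s1 * s2 / (4 * w * lam * s3) := by
      intro w s1 s2 s3 hw hs3
      rw [div_mul_div_comm, div_div_eq_mul_div, div_mul_eq_mul_div,
        mul_div_mul_right _ _ hw, div_div, div_div, div_div,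
        show w * (s3 * (lam * 4)) = 4 * w * lam * s3 by ring]
    rw [comb _ _ _ _ h1' sθm', comb _ _ _ _ hm1' sθp',
      mul_comm ((θ:ℝ):ℂ) (lam - 1), mul_comm ((θ:ℝ):ℂ) (lam + 1),
      mul_comm a (lam - 1), mul_comm b (lam - 1), mul_comm a (lam + 1), mul_comm b (lam + 1)]
end

section
/- Let θ ∈ (0,π) and φ ∈ [0,θ]. Set Σ := {λ ∈ ℂ : (|Re λ| + 1)θ < π}. Then for every λ ∈ Σ \ {−1,0,1} the quantities λ sin((λ+1)θ) and λ sin((λ−1)θ) are nonzero, and there exists a function H : ℂ → ℂ that is holomorphic on Σ and satisfies H(λ) = sin((λ+1)φ)/(4λ sin((λ+1)θ)) − sin((λ−1)φ)/(4λ sin((λ−1)θ)) for every λ ∈ Σ \ {−1,0,1}. -/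
open Set

private lemma entire_dslope {f : ℂ → ℂ} (hf : Differentiable ℂ f) (a : ℂ) :
    Differentiable ℂ (dslope f a) := by
  intro b
  rcases eq_or_ne b a with rfl | h
  · obtain ⟨p, hp⟩ := hf.analyticAt b
    exact hp.has_fpower_series_dslope_fslope.analyticAt.differentiableAt
  · exact (differentiableAt_dslope_of_ne h).2 (hf b)

private lemma mul_dslope {f : ℂ → ℂ} {a : ℂ} (h0 : f a = 0) (z : ℂ) :
    (z - a) * dslope f a z = f z := by
  have := sub_smul_dslope f a z
  simpa [h0, smul_eq_mul] using this

/-- Holomorphic extension in `λ` of the boundary derivative `∂_{φ'}G(λ,φ,θ)` of the Green's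
function of the fourth-order operator `∂_φ⁴ + 2(λ²+1)∂_φ² + (λ²−1)²` across `−1, 0, 1`
to the strip `Σ = {λ : (|Re λ| + 1)θ < π}`. -/
theorem green_boundary_holomorphic_extension (θ : ℝ) (hθ : θ ∈ Ioo (0:ℝ) Real.pi)
    (φ : ℝ) (hφ : φ ∈ Icc (0:ℝ) θ) :
    (∀ lam ∈ {l : ℂ | (|l.re| + 1) * θ < Real.pi} \ ({-1, 0, 1} : Set ℂ),
      lam * Complex.sin ((lam + 1) * θ) ≠ 0 ∧
      lam * Complex.sin ((lam - 1) * θ) ≠ 0) ∧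
    ∃ H : ℂ → ℂ, DifferentiableOn ℂ H {l : ℂ | (|l.re| + 1) * θ < Real.pi} ∧
      ∀ lam ∈ {l : ℂ | (|l.re| + 1) * θ < Real.pi} \ ({-1, 0, 1} : Set ℂ),
        H lam =
          Complex.sin ((lam + 1) * (φ : ℂ)) / (4 * lam * Complex.sin ((lam + 1) * θ))
          - Complex.sin ((lam - 1) * (φ : ℂ)) / (4 * lam * Complex.sin ((lam - 1) * θ)) := by
  obtain ⟨hθ0, hθπ⟩ := hθ
  have hθc : (θ:ℂ) ≠ 0 := Complex.ofReal_ne_zero.2 hθ0.ne'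
  -- Key: within the strip, the only possible zero of sin((lam+c)θ) is lam = -c (c = ±1)
  have key : ∀ (c : ℂ), (c = 1 ∨ c = -1) →
      ∀ lam ∈ {l : ℂ | (|l.re| + 1) * θ < Real.pi},
      Complex.sin ((lam + c) * θ) = 0 → lam = -c := by
    rintro c hc lam hlam hs
    rw [Complex.sin_eq_zero_iff] at hs
    obtain ⟨k, hk⟩ := hs
    have hcim : c.im = 0 := by rcases hc with rfl | rfl <;> simp
    have hcre : |c.re| = 1 := by rcases hc with rfl | rfl <;> simp
    have him : lam.im = 0 := by
      have h := congrArg Complex.im hk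
      simp [Complex.mul_im, Complex.add_im, hcim, hθ0.ne'] at h
      exact h
    have hre : (lam.re + c.re) * θ = k * Real.pi := by
      have h := congrArg Complex.re hk
      simpa [Complex.mul_re, Complex.add_re, hcim, him] using h
    have hk0 : k = 0 := by
      have h1 : |(k:ℝ)| * Real.pi < Real.pi := by
        have h0 : |(lam.re + c.re) * θ| < Real.pi := by
          rw [abs_mul, abs_of_pos hθ0]
          have hle : |lam.re + c.re| ≤ |lam.re| + 1 := by
            have := abs_add_le lam.re c.re
            rw [hcre] at this
            exact this
          have := mul_le_mul_of_nonneg_right hle hθ0.le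
          exact lt_of_le_of_lt this hlam
        rw [hre, abs_mul, abs_of_pos Real.pi_pos] at h0
        exact h0
      have h2 : |(k:ℝ)| < 1 := by
        nlinarith [Real.pi_pos, abs_nonneg (k:ℝ)]
      have h3 : |k| < 1 := by exact_mod_cast h2
      rw [abs_lt] at h3
      omega
    have hre0 : lam.re = -c.re := by
      rw [hk0] at hre
      simp at hre
      rcases hre with h | h
      · linarith
      · exact absurd h hθ0.ne'
    apply Complex.ext <;> simp [him, hcim, hre0]
  -- the entire function sin z / z
  set Sf : ℂ → ℂ := dslope Complex.sin 0 with hSf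
  have hSdiff : Differentiable ℂ Sf := entire_dslope Complex.differentiable_sin 0
  have hSeq : ∀ z : ℂ, z * Sf z = Complex.sin z := fun z => by
    simpa using mul_dslope (f := Complex.sin) (a := 0) Complex.sin_zero z
  have hS0 : Sf 0 = 1 := by
    rw [hSf, dslope_same]
    simp [Complex.deriv_sin]
  have hSne : ∀ (c : ℂ), (c = 1 ∨ c = -1) →
      ∀ lam ∈ {l : ℂ | (|l.re| + 1) * θ < Real.pi}, Sf ((lam + c) * θ) ≠ 0 := by
    intro c hc lam hlam
    by_cases hz : (lam + c) * θ = 0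
    · rw [hz, hS0]; exact one_ne_zero
    · intro h
      have hsin : Complex.sin ((lam + c) * θ) = 0 := by
        rw [← hSeq, h, mul_zero]
      have := key c hc lam hlam hsin
      apply hz
      rw [this]; ring
  have hsinne : ∀ (c : ℂ), (c = 1 ∨ c = -1) →
      ∀ lam ∈ {l : ℂ | (|l.re| + 1) * θ < Real.pi} \ ({-1, 0, 1} : Set ℂ),
      Complex.sin ((lam + c) * θ) ≠ 0 := by
    rintro c hc lam ⟨hlam, hlam'⟩ hs
    have := key c hc lam hlam hs
    rcases hc with rfl | rfl
    · exact hlam' (by simp [this])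
    · exact hlam' (by simp [this])
  constructor
  · rintro lam hlam
    have hl0 : lam ≠ 0 := by
      rintro rfl
      exact hlam.2 (by simp)
    refine ⟨mul_ne_zero hl0 (hsinne 1 (Or.inl rfl) lam hlam), mul_ne_zero hl0 ?_⟩
    have := hsinne (-1) (Or.inr rfl) lam hlam
    simpa [sub_eq_add_neg] using this
  -- construction of the extension
  set N : ℂ → ℂ := fun l => Complex.sin ((l+1)*(φ:ℂ)) * Complex.sin ((l-1)*(θ:ℂ))
      - Complex.sin ((l-1)*(φ:ℂ)) * Complex.sin ((l+1)*(θ:ℂ)) with hN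
  have hNdiff : Differentiable ℂ N := by
    apply Differentiable.sub <;> apply Differentiable.mul <;>
      exact Complex.differentiable_sin.comp (by fun_prop)
  have hN0 : N 0 = 0 := by
    simp only [hN]
    norm_num [Complex.sin_neg]
  set N1 : ℂ → ℂ := dslope N 0 with hN1
  set N2 : ℂ → ℂ := dslope N1 1 with hN2
  set Mf : ℂ → ℂ := dslope N2 (-1) with hMf
  have e1 : ∀ l, l * N1 l = N l := fun l => by simpa using mul_dslope hN0 l
  have hNone : N 1 = 0 := by simp [hN]
  have hNnegone : N (-1) = 0 := by simp [hN]
  have hN1one : N1 1 = 0 := by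
    have h := e1 1
    rw [hNone] at h
    simpa using h
  have hN1neg : N1 (-1) = 0 := by
    have h := e1 (-1)
    rw [hNnegone] at h
    simpa [neg_eq_zero] using h
  have e2 : ∀ l, (l - 1) * N2 l = N1 l := fun l => mul_dslope hN1one l
  have hN2neg : N2 (-1) = 0 := by
    have h := e2 (-1)
    rw [hN1neg] at h
    rcases mul_eq_zero.mp h with h' | h'
    · norm_num at h'
    · exact h'
  have e3 : ∀ l, (l + 1) * Mf l = N2 l := fun l => by
    simpa [sub_neg_eq_add] using mul_dslope hN2neg l
  have Nfact : ∀ l, N l = l * (l - 1) * (l + 1) * Mf l := fun l => by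
    rw [← e1 l, ← e2 l, ← e3 l]; ring
  have Mfdiff : Differentiable ℂ Mf :=
    entire_dslope (entire_dslope (entire_dslope hNdiff 0) 1) (-1)
  refine ⟨fun l => Mf l / (4 * (θ:ℂ)^2 * Sf ((l+1)*θ) * Sf ((l-1)*θ)), ?_, ?_⟩
  · intro l hl
    apply DifferentiableAt.differentiableWithinAt
    apply DifferentiableAt.div
    · exact Mfdiff l
    · exact (((differentiableAt_const _).mul
        ((hSdiff _).comp l ((differentiableAt_id.add_const 1).mul_const _))).mul
        ((hSdiff _).comp l ((differentiableAt_id.sub_const 1).mul_const _)))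
    · apply mul_ne_zero
      apply mul_ne_zero
      · exact mul_ne_zero (by norm_num) (pow_ne_zero 2 hθc)
      · exact hSne 1 (Or.inl rfl) l hl
      · simpa [sub_eq_add_neg] using hSne (-1) (Or.inr rfl) l hl
  · rintro lam ⟨hlam, hlam'⟩
    have hl0 : lam ≠ 0 := fun h => hlam' (by simp [h])
    have hlp : lam + 1 ≠ 0 := fun h => hlam' (by
      have : lam = -1 := by linear_combination h
      simp [this])
    have hlm : lam - 1 ≠ 0 := sub_ne_zero.mpr (fun h => hlam' (by simp [h]))
    have sp := hSne 1 (Or.inl rfl) lam hlam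
    have sm : Sf ((lam - 1) * θ) ≠ 0 := by
      simpa [sub_eq_add_neg] using hSne (-1) (Or.inr rfl) lam hlam
    have rp : Complex.sin ((lam+1)*(θ:ℂ)) = (lam+1)*θ * Sf ((lam+1)*θ) := (hSeq _).symm
    have rm : Complex.sin ((lam-1)*(θ:ℂ)) = (lam-1)*θ * Sf ((lam-1)*θ) := (hSeq _).symm
    have hkey : Complex.sin ((lam+1)*(φ:ℂ)) * Complex.sin ((lam-1)*(θ:ℂ))
        - Complex.sin ((lam-1)*(φ:ℂ)) * Complex.sin ((lam+1)*(θ:ℂ))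
        = lam * (lam - 1) * (lam + 1) * Mf lam := Nfact lam
    rw [rp, rm] at hkey
    rw [rp, rm]
    have hP : 4 * lam * ((lam + 1) * (θ:ℂ) * Sf ((lam+1)*θ)) ≠ 0 :=
      mul_ne_zero (mul_ne_zero (by norm_num) hl0)
        (mul_ne_zero (mul_ne_zero hlp hθc) sp)
    have hQ : 4 * lam * ((lam - 1) * (θ:ℂ) * Sf ((lam-1)*θ)) ≠ 0 :=
      mul_ne_zero (mul_ne_zero (by norm_num) hl0)
        (mul_ne_zero (mul_ne_zero hlm hθc) sm)
    have hD : 4 * (θ:ℂ)^2 * Sf ((lam+1)*θ) * Sf ((lam-1)*θ) ≠ 0 :=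
      mul_ne_zero (mul_ne_zero (mul_ne_zero (by norm_num) (pow_ne_zero 2 hθc)) sp) sm
    rw [div_sub_div _ _ hP hQ, div_eq_div_iff hD (mul_ne_zero hP hQ)]
    linear_combination (-16 * lam * (θ:ℂ)^2 * Sf ((lam+1)*θ) * Sf ((lam-1)*θ)) * hkey
end

section
/- For every ε ∈ (0,1) there exists a constant C > 0, depending only on ε, such that for all θ > 0, all λ ∈ ℂ and all φ ∈ (0,θ) satisfying 1 − (1−ε)π/θ ≤ Re λ ≤ (1−ε)π/θ − 1, |Im λ|·θ < 1/4, |λ−1| ≥ 1/4 and |λ+1| ≥ 1/4, one has |sin((λ+1)φ)/(4λ sin((λ+1)θ)) − sin((λ−1)φ)/(4λ sin((λ−1)θ))| ≤ C·θ/|λ|. -/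
open Real

/-!
Over the common denominator `4λ sin((λ+1)θ) sin((λ-1)θ)` the addition formulas turn the
numerator into `sin(λu) sin v - sin(λv) sin u` with `u = θ - φ`, `v = θ + φ`. The terms
linear in `u, v` cancel, so, as `|λ|θ = O(1)`, the numerator is `O(|λ| (1 + |λ|²) θ⁴)`.
The condition on `Re λ` keeps the real parts of `(λ ± 1)θ` in `[-(1-ε)π, (1-ε)π]`, where
`|sin z| ≳_ε |z|`, so the denominator is `≳_ε |λ| θ² |λ+1| |λ-1| ≳ |λ| θ² (1 + |λ|²)`.
The difference is therefore `O_ε(θ²) = O_ε(θ / |λ|)`.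
-/

namespace Real

theorem mul_sin_le_mul_sin {x y : ℝ} (hy : 0 ≤ y) (hyx : y ≤ x) (hx : x ≤ π) :
    y * sin x ≤ x * sin y := by
  obtain rfl | hx0 := (hy.trans hyx).eq_or_lt
  · simp [le_antisymm hyx hy]
  have hconc := strictConcaveOn_sin_Icc.concaveOn.2 (x := x) (y := 0) ⟨hx0.le, hx⟩
    ⟨le_rfl, pi_pos.le⟩ (div_nonneg hy hx0.le) (sub_nonneg.2 ((div_le_one hx0).2 hyx))
    (add_sub_cancel _ _)
  simp only [smul_eq_mul, mul_zero, add_zero, sin_zero, div_mul_cancel₀ _ hx0.ne'] at hconc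
  rwa [div_mul_eq_mul_div, div_le_iff₀' hx0] at hconc

theorem abs_mul_sin_le_mul_abs_sin {t X : ℝ} (ht : |t| ≤ X) (hX : X ≤ π) :
    |t| * sin X ≤ X * |sin t| := by
  have hsin : sin |t| ≤ |sin t| := by
    rcases abs_cases t with ⟨h, _⟩ | ⟨h, _⟩ <;> rw [h]
    · exact le_abs_self _
    · rw [sin_neg]; exact neg_le_abs _
  calc |t| * sin X ≤ X * sin |t| := mul_sin_le_mul_sin (abs_nonneg t) ht hX
    _ ≤ X * |sin t| := by gcongr; exact (abs_nonneg t).trans ht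

end Real

namespace Complex

open Finset in
theorem norm_sin_sub_taylor_le (z : ℂ) (n : ℕ) :
    ‖sin z - (∑ m ∈ range n, (-z * I) ^ m / m.factorial
        - ∑ m ∈ range n, (z * I) ^ m / m.factorial) * I / 2‖
      ≤ ‖z‖ ^ n * Real.exp ‖z‖ := by
  have hneg := norm_exp_sub_sum_le_norm_mul_exp (-z * I) n
  have hpos := norm_exp_sub_sum_le_norm_mul_exp (z * I) n
  simp only [neg_mul, norm_neg, norm_mul, norm_I, mul_one] at hneg hpos
  rw [sin, ← sub_div, ← sub_mul, norm_div, norm_mul, norm_I, mul_one, Complex.norm_two,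
    div_le_iff₀ two_pos]
  calc _ = ‖(exp (-(z * I)) - ∑ m ∈ range n, (-(z * I)) ^ m / m.factorial)
          - (exp (z * I) - ∑ m ∈ range n, (z * I) ^ m / m.factorial)‖ := by
        congr 1; ring_nf
    _ ≤ _ := (norm_sub_le _ _).trans (by linarith)

theorem norm_sin_le (z : ℂ) : ‖sin z‖ ≤ ‖z‖ * Real.exp ‖z‖ := by
  simpa using norm_sin_sub_taylor_le z 1

theorem norm_sin_sub_self_le (z : ℂ) : ‖sin z - z‖ ≤ ‖z‖ ^ 3 * Real.exp ‖z‖ := by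
  convert norm_sin_sub_taylor_le z 3 using 4
  simp only [Finset.sum_range_succ, Finset.sum_range_zero]
  ring_nf
  simp only [I_sq]
  ring

theorem sq_norm_sin (z : ℂ) : ‖sin z‖ ^ 2 = Real.sin z.re ^ 2 + Real.sinh z.im ^ 2 := by
  rw [Complex.sq_norm, normSq_apply, sin_eq]
  simp only [add_re, add_im, mul_re, mul_im, I_re, I_im, ← ofReal_sin, ← ofReal_cos,
    ← ofReal_cosh, ← ofReal_sinh, ofReal_re, ofReal_im]
  nlinarith [Real.sin_sq_add_cos_sq z.re, Real.cosh_sq z.im]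

theorem sin_mul_norm_le_mul_norm_sin {z : ℂ} {X : ℝ} (hre : |z.re| ≤ X) (hX : X ≤ π) :
    Real.sin X * ‖z‖ ≤ X * ‖sin z‖ := by
  have hX0 : 0 ≤ X := (abs_nonneg _).trans hre
  have hsinX : 0 ≤ Real.sin X := Real.sin_nonneg_of_nonneg_of_le_pi hX0 hX
  have hre' := Real.abs_mul_sin_le_mul_abs_sin hre hX
  have him : Real.sin X * |z.im| ≤ X * |Real.sinh z.im| := by
    rw [Real.abs_sinh]
    exact mul_le_mul (Real.sin_le hX0) (Real.self_le_sinh_iff.2 (abs_nonneg _))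
      (abs_nonneg _) hX0
  rw [← pow_le_pow_iff_left₀ (by positivity) (by positivity) two_ne_zero, mul_pow, mul_pow,
    sq_norm_sin, Complex.sq_norm, normSq_apply]
  nlinarith [sq_abs z.re, sq_abs z.im, sq_abs (Real.sin z.re), sq_abs (Real.sinh z.im),
    pow_le_pow_left₀ (by positivity) hre' 2, pow_le_pow_left₀ (by positivity) him 2]

theorem one_add_sq_norm_mul_sq_le {z : ℂ} {δ : ℝ} (hδ0 : 0 ≤ δ) (hδ1 : δ ≤ 1)
    (hm : δ ≤ ‖z - 1‖) (hp : δ ≤ ‖z + 1‖) :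
    (1 + ‖z‖ ^ 2) * δ ^ 2 ≤ 5 * (‖z - 1‖ * ‖z + 1‖) := by
  have hprod : ‖z‖ ^ 2 - 1 ≤ ‖z - 1‖ * ‖z + 1‖ := by
    have h := norm_sub_norm_le (z ^ 2) 1
    rw [norm_pow, norm_one] at h
    rwa [← norm_mul, show (z - 1) * (z + 1) = z ^ 2 - 1 by ring]
  have hδ2 : δ ^ 2 ≤ ‖z - 1‖ * ‖z + 1‖ := by rw [sq]; exact mul_le_mul hm hp hδ0 (norm_nonneg _)
  have hδ2' : δ ^ 2 ≤ 1 := pow_le_one₀ hδ0 hδ1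
  rcases le_or_gt ‖z‖ 2 with hz | hz
  · nlinarith [norm_nonneg z]
  · nlinarith

theorem sin_mul_sin_sub_sin_mul_sin_eq (lam φ θ : ℂ) :
    sin ((lam + 1) * φ) * sin ((lam - 1) * θ) - sin ((lam - 1) * φ) * sin ((lam + 1) * θ)
      = sin (lam * (θ - φ)) * sin (θ + φ) - sin (lam * (θ + φ)) * sin (θ - φ) := by
  simp only [add_mul, sub_mul, mul_add, mul_sub, one_mul, sin_add, sin_sub]
  ring

theorem norm_sin_mul_sin_sub_sin_mul_sin_le {lam u v : ℂ} {ρ R : ℝ} (hu : ‖u‖ ≤ ρ)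
    (hv : ‖v‖ ≤ ρ) (hρR : ρ ≤ R) (hlamρ : ‖lam‖ * ρ ≤ R) :
    ‖sin (lam * u) * sin v - sin (lam * v) * sin u‖
      ≤ 2 * Real.exp R ^ 2 * ‖lam‖ * (1 + ‖lam‖ ^ 2) * ρ ^ 4 := by
  set K := Real.exp R
  set r := ‖lam‖
  have hρ : 0 ≤ ρ := (norm_nonneg u).trans hu
  have hK : 1 ≤ K := Real.one_le_exp ((norm_nonneg u).trans (hu.trans hρR))
  have sin_le {w : ℂ} {s : ℝ} (hw : ‖w‖ ≤ s) (hs : s ≤ R) : ‖sin w‖ ≤ s * K :=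
    (norm_sin_le w).trans (mul_le_mul hw (Real.exp_le_exp.2 (hw.trans hs))
      (Real.exp_pos _).le ((norm_nonneg w).trans hw))
  have sin_sub_le {w : ℂ} {s : ℝ} (hw : ‖w‖ ≤ s) (hs : s ≤ R) : ‖sin w - w‖ ≤ s ^ 3 * K :=
    (norm_sin_sub_self_le w).trans (mul_le_mul (pow_le_pow_left₀ (norm_nonneg w) hw 3)
      (Real.exp_le_exp.2 (hw.trans hs)) (Real.exp_pos _).le
      (pow_nonneg ((norm_nonneg w).trans hw) 3))
  have hlu : ‖lam * u‖ ≤ r * ρ := by rw [norm_mul]; gcongr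
  have hlv : ‖lam * v‖ ≤ r * ρ := by rw [norm_mul]; gcongr
  -- each term pairs a factor of size `O(ρ)` with a cubic Taylor remainder of `sin`
  have hsplit : sin (lam * u) * sin v - sin (lam * v) * sin u
      = sin (lam * u) * (sin v - v) - sin (lam * v) * (sin u - u)
        + (v * (sin (lam * u) - lam * u) - u * (sin (lam * v) - lam * v)) := by ring
  rw [hsplit]
  refine (norm_add_le _ _).trans ((add_le_add (norm_sub_le _ _) (norm_sub_le _ _)).trans ?_)
  simp only [norm_mul]
  have h1 := mul_le_mul (sin_le hlu hlamρ) (sin_sub_le hv hρR) (norm_nonneg _) (by positivity)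
  have h2 := mul_le_mul (sin_le hlv hlamρ) (sin_sub_le hu hρR) (norm_nonneg _) (by positivity)
  have h3 := mul_le_mul hv (sin_sub_le hlu hlamρ) (norm_nonneg _) hρ
  have h4 := mul_le_mul hu (sin_sub_le hlv hlamρ) (norm_nonneg _) hρ
  have hKK : r ^ 3 * ρ ^ 4 * K ≤ r ^ 3 * ρ ^ 4 * K ^ 2 := by
    gcongr; nlinarith
  nlinarith

end Complex

open Complex in
theorem sin_sq_mul_sq_mul_le_norm_sin_mul_norm_sin {lam : ℂ} {θ X : ℝ} (hθ : 0 < θ)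
    (hX : X ≤ π) (hp : |(lam.re + 1) * θ| ≤ X) (hm : |(lam.re - 1) * θ| ≤ X)
    (h1 : 1 / 4 ≤ ‖lam - 1‖) (h2 : 1 / 4 ≤ ‖lam + 1‖) :
    Real.sin X ^ 2 * θ ^ 2 * (1 + ‖lam‖ ^ 2)
      ≤ 80 * X ^ 2 * (‖sin ((lam + 1) * θ)‖ * ‖sin ((lam - 1) * θ)‖) := by
  have hX0 : 0 ≤ X := (abs_nonneg _).trans hp
  have hsX : 0 ≤ Real.sin X := Real.sin_nonneg_of_nonneg_of_le_pi hX0 hX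
  have hA := sin_mul_norm_le_mul_norm_sin (z := (lam + 1) * θ) (by simpa using hp) hX
  have hB := sin_mul_norm_le_mul_norm_sin (z := (lam - 1) * θ) (by simpa using hm) hX
  simp only [norm_mul, norm_real, Real.norm_eq_abs, abs_of_pos hθ] at hA hB
  have hAB := mul_le_mul hA hB (by positivity) (by positivity)
  have hδ := one_add_sq_norm_mul_sq_le (z := lam) (by norm_num) (by norm_num) h1 h2
  nlinarith [sq_nonneg (Real.sin X * θ)]

open Complex in
theorem norm_sin_quotient_sub_le {lam : ℂ} {θ φ X : ℝ} (hlam : lam ≠ 0) (hθ : 0 < θ)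
    (hφ : φ ∈ Set.Icc 0 θ) (hθ4 : θ ≤ 4) (hlamθ : ‖lam‖ * θ ≤ 4) (hX : X ≤ π)
    (hsX : 0 < Real.sin X) (hp : |(lam.re + 1) * θ| ≤ X) (hm : |(lam.re - 1) * θ| ≤ X)
    (h1 : 1 / 4 ≤ ‖lam - 1‖) (h2 : 1 / 4 ≤ ‖lam + 1‖) :
    ‖sin ((lam + 1) * φ) / (4 * lam * sin ((lam + 1) * θ))
        - sin ((lam - 1) * φ) / (4 * lam * sin ((lam - 1) * θ))‖
      ≤ 640 * Real.exp 8 ^ 2 * (X / Real.sin X) ^ 2 * θ ^ 2 := by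
  obtain ⟨hφ0, hφθ⟩ := hφ
  set A := sin ((lam + 1) * θ)
  set B := sin ((lam - 1) * θ)
  have hden := sin_sq_mul_sq_mul_le_norm_sin_mul_norm_sin hθ hX hp hm h1 h2
  have hAB : 0 < ‖A‖ * ‖B‖ := by
    have : 0 < Real.sin X ^ 2 * θ ^ 2 * (1 + ‖lam‖ ^ 2) := by positivity
    nlinarith [norm_nonneg A, norm_nonneg B]
  have hA : A ≠ 0 := by rintro hA; simp [hA] at hAB
  have hB : B ≠ 0 := by rintro hB; simp [hB] at hAB
  have hnum := norm_sin_mul_sin_sub_sin_mul_sin_le (lam := lam) (u := θ - φ) (v := θ + φ)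
    (ρ := 2 * θ) (R := 8)
    (by rw [← ofReal_sub, norm_real, Real.norm_eq_abs, abs_le]; constructor <;> linarith)
    (by rw [← ofReal_add, norm_real, Real.norm_eq_abs, abs_le]; constructor <;> linarith)
    (by linarith) (by linarith)
  rw [div_sub_div _ _ (by simp [hlam, hA]) (by simp [hlam, hB]),
    show sin ((lam + 1) * φ) * (4 * lam * B) - 4 * lam * A * sin ((lam - 1) * φ)
      = 4 * lam * (sin ((lam + 1) * φ) * B - sin ((lam - 1) * φ) * A) by ring,
    sin_mul_sin_sub_sin_mul_sin_eq, mul_assoc (4 * lam) A,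
    mul_div_mul_left _ _ (by simp [hlam]), norm_div, div_le_iff₀ (by simp [hlam, hA, hB])]
  set r := ‖lam‖
  calc _ ≤ 2 * Real.exp 8 ^ 2 * r * (1 + r ^ 2) * (2 * θ) ^ 4 := hnum
    _ = 32 * Real.exp 8 ^ 2 * r * θ ^ 2 / Real.sin X ^ 2
          * (Real.sin X ^ 2 * θ ^ 2 * (1 + r ^ 2)) := by field_simp; ring
    _ ≤ 32 * Real.exp 8 ^ 2 * r * θ ^ 2 / Real.sin X ^ 2
          * (80 * X ^ 2 * (‖A‖ * ‖B‖)) := by gcongr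
    _ = _ := by simp only [norm_mul, RCLike.norm_ofNat]; field_simp; ring

theorem abs_add_mul_le_of_le_of_le {a c θ X : ℝ} (hθ : 0 < θ) (hc : |c| ≤ 1)
    (h1 : 1 - X / θ ≤ a) (h2 : a ≤ X / θ - 1) : |(a + c) * θ| ≤ X := by
  have hX : X / θ * θ = X := div_mul_cancel₀ X hθ.ne'
  rw [abs_le] at hc ⊢
  constructor <;>
    nlinarith [mul_le_mul_of_nonneg_right h1 hθ.le, mul_le_mul_of_nonneg_right h2 hθ.le]

/-- Estimate (C.2): for `Re λ ∈ I_ε`, `|Im λ|θ < 1/4`, `|λ−1| ≥ 1/4`, `|λ+1| ≥ 1/4`,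
the difference of the two sine quotients is bounded by `Cθ/|λ|`, exploiting cancellation. -/
theorem sine_quotient_cancellation (ε : ℝ) (hε : ε ∈ Set.Ioo (0:ℝ) 1) :
    ∃ C : ℝ, 0 < C ∧ ∀ θ : ℝ, 0 < θ → ∀ lam : ℂ, ∀ φ : ℝ,
      1 - (1 - ε) * π / θ ≤ lam.re → lam.re ≤ (1 - ε) * π / θ - 1 →
      |lam.im| * θ < 1/4 →
      1/4 ≤ ‖lam - 1‖ → 1/4 ≤ ‖lam + 1‖ →
      φ ∈ Set.Ioo (0:ℝ) θ →
      ‖Complex.sin ((lam + 1) * (φ : ℂ)) / (4 * lam * Complex.sin ((lam + 1) * θ))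
          - Complex.sin ((lam - 1) * (φ : ℂ)) / (4 * lam * Complex.sin ((lam - 1) * θ))‖
        ≤ C * θ / ‖lam‖ := by
  obtain ⟨hε0, hε1⟩ := hε
  set X := (1 - ε) * π
  have hXπ : X ≤ π := by nlinarith [pi_pos]
  have hsX : 0 < Real.sin X :=
    Real.sin_pos_of_pos_of_lt_pi (by nlinarith [pi_pos]) (by nlinarith [pi_pos])
  refine ⟨2560 * Real.exp 8 ^ 2 * (X / Real.sin X) ^ 2, by positivity, ?_⟩
  intro θ hθ lam φ h1 h2 him hm hp hφ
  rcases eq_or_ne lam 0 with rfl | hlam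
  · simp
  have hθX : θ ≤ X := (one_le_div hθ).1 (by linarith)
  have hre (c : ℝ) (hc : |c| ≤ 1) := abs_add_mul_le_of_le_of_le hθ hc h1 h2
  have hlamθ : ‖lam‖ * θ ≤ 4 := by
    have hre0 : |lam.re * θ| ≤ X := by simpa using hre 0 (by simp)
    calc ‖lam‖ * θ ≤ (|lam.re| + |lam.im|) * θ := by
          gcongr; exact Complex.norm_le_abs_re_add_abs_im lam
      _ = |lam.re * θ| + |lam.im| * θ := by rw [abs_mul, abs_of_pos hθ]; ring
      _ ≤ 4 := by linarith [Real.pi_lt_d2]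
  have key := norm_sin_quotient_sub_le hlam hθ (Set.Ioo_subset_Icc_self hφ)
    (by linarith [Real.pi_lt_d2]) hlamθ hXπ hsX (hre 1 (by simp))
    (by simpa [sub_eq_add_neg] using hre (-1) (by simp)) hm hp
  rw [le_div_iff₀ (norm_pos_iff.2 hlam)]
  calc _ ≤ 640 * Real.exp 8 ^ 2 * (X / Real.sin X) ^ 2 * θ ^ 2 * ‖lam‖ := by gcongr
    _ = 640 * Real.exp 8 ^ 2 * (X / Real.sin X) ^ 2 * θ * (‖lam‖ * θ) := by ring
    _ ≤ 640 * Real.exp 8 ^ 2 * (X / Real.sin X) ^ 2 * θ * 4 := by gcongr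
    _ = _ := by ring
end

section
/- For every ε ∈ (0,1) there exists a constant c > 0, depending only on ε, such that the following holds. Let θ ∈ (0, (1−ε)π), let α ∈ ℝ with 1 − (1−ε)π/θ ≤ α ≤ (1−ε)π/θ − 1, let t ∈ ℝ, let k ≥ 1 be an integer, and set λ̃ = α + i t. Then |(λ̃ − 2α + 1)² − (kπ/θ)²|² ≥ c·(kπ/θ)⁴, |(λ̃ − 2α + 1)² − (kπ/θ)²|² ≥ c·|λ̃ − 1|⁴, and |(λ̃ − 2α + 1)² − (kπ/θ)²|² ≥ c·|λ̃|⁴. -/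
/-!
Put `z = λ̃ - 2α + 1 = (1 - α) + it` and `b = kπ/θ`. Factoring `z² - b² = (z - b)(z + b)` and using
`|b ∓ Re z| ≥ |b| - |Re z|` gives `‖z² - b²‖ ≥ (|b| - |Re z|)² + t²`. On `I_ε` both `|1 - α|` and
`|α|` are at most `(1 - ε)π/θ ≤ (1 - ε)b`, so the right-hand side dominates `ε²b²` as well as
`ε²|λ̃ - 1|²` and `ε²|λ̃|²`; squaring gives the three bounds with `c = ε⁴`.
-/

open Real Complex

namespace Complex

lemma sq_abs_sub_abs_re_add_sq_im_le_sq_norm_sub_ofReal (z : ℂ) (b : ℝ) :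
    (|b| - |z.re|) ^ 2 + z.im ^ 2 ≤ ‖z - b‖ ^ 2 := by
  have hre : (|b| - |z.re|) ^ 2 ≤ (z.re - b) ^ 2 :=
    sq_le_sq.mpr ((abs_abs_sub_abs_le_abs_sub b z.re).trans (abs_sub_comm b z.re).le)
  have hnorm : ‖z - b‖ ^ 2 = (z.re - b) ^ 2 + z.im ^ 2 := by
    rw [Complex.sq_norm, normSq_apply]
    simp only [sub_re, sub_im, ofReal_re, ofReal_im, sub_zero]
    ring
  linarith

lemma sq_abs_sub_abs_re_add_sq_im_le_norm_sq_sub_sq (z : ℂ) (b : ℝ) :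
    (|b| - |z.re|) ^ 2 + z.im ^ 2 ≤ ‖z ^ 2 - (b : ℂ) ^ 2‖ := by
  have hminus := sq_abs_sub_abs_re_add_sq_im_le_sq_norm_sub_ofReal z b
  have hplus : (|b| - |z.re|) ^ 2 + z.im ^ 2 ≤ ‖z + b‖ ^ 2 := by
    simpa [abs_neg] using sq_abs_sub_abs_re_add_sq_im_le_sq_norm_sub_ofReal z (-b)
  have hfactor : ‖z ^ 2 - (b : ℂ) ^ 2‖ = ‖z - b‖ * ‖z + b‖ := by
    rw [← norm_mul]
    ring_nf
  refine (pow_le_pow_iff_left₀ (by positivity) (norm_nonneg _) two_ne_zero).mp ?_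
  rw [hfactor, mul_pow, sq]
  exact mul_le_mul hminus hplus (by positivity) (by positivity)

variable {ε b : ℝ} {z : ℂ}

lemma sq_mul_sq_add_sq_im_le_norm_sq_sub_sq (hε : 0 ≤ ε) (hb : 0 ≤ b)
    (hz : |z.re| ≤ (1 - ε) * b) :
    ε ^ 2 * b ^ 2 + z.im ^ 2 ≤ ‖z ^ 2 - (b : ℂ) ^ 2‖ := by
  have hgap : ε * b ≤ |b| - |z.re| := by rw [abs_of_nonneg hb]; linarith
  have := pow_le_pow_left₀ (by positivity) hgap 2
  linarith [sq_abs_sub_abs_re_add_sq_im_le_norm_sq_sub_sq z b, mul_pow ε b 2]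

lemma sq_mul_sq_norm_le_norm_sq_sub_sq {w : ℂ} (hε₀ : 0 ≤ ε) (hε₁ : ε ≤ 1)
    (hz : |z.re| ≤ (1 - ε) * b) (hw : |w.re| ≤ b) (him : |w.im| ≤ |z.im|) :
    ε ^ 2 * ‖w‖ ^ 2 ≤ ‖z ^ 2 - (b : ℂ) ^ 2‖ := by
  have hb : 0 ≤ b := (abs_nonneg _).trans hw
  have hwre : w.re ^ 2 ≤ b ^ 2 := sq_le_sq' (abs_le.mp hw).1 (abs_le.mp hw).2
  have hwim : w.im ^ 2 ≤ z.im ^ 2 := sq_le_sq.mpr him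
  have hε : ε ^ 2 ≤ 1 := pow_le_one₀ hε₀ hε₁
  have hw : ‖w‖ ^ 2 = w.re ^ 2 + w.im ^ 2 := by rw [Complex.sq_norm, normSq_apply]; ring
  rw [hw]
  nlinarith [sq_mul_sq_add_sq_im_le_norm_sq_sub_sq hε₀ hb hz, sq_nonneg z.im]

end Complex

lemma abs_add_one_le_mul_div_of_le_div_sub_one {ε θ α : ℝ} {k : ℕ} (hε : ε ≤ 1) (hθ : 0 < θ)
    (hk : 1 ≤ k) (hα₁ : 1 - (1 - ε) * π / θ ≤ α) (hα₂ : α ≤ (1 - ε) * π / θ - 1) :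
    |α| + 1 ≤ (1 - ε) * (k * π / θ) := by
  have hα : |α| + 1 ≤ (1 - ε) * π / θ := by linarith [abs_le.mpr ⟨by linarith, hα₂⟩]
  have hπθ : π / θ ≤ k * (π / θ) :=
    le_mul_of_one_le_left (div_nonneg pi_pos.le hθ.le) (by exact_mod_cast hk)
  calc |α| + 1 ≤ (1 - ε) * (π / θ) := by rwa [← mul_div_assoc]
    _ ≤ (1 - ε) * (k * π / θ) := by
      rw [mul_div_assoc]; exact mul_le_mul_of_nonneg_left hπθ (by linarith)

/-- Lower bounds on the denominators `(λ̃ − 2α + 1)² − (kπ/θ)²` in the Fourier-series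
representation of the Helmholtz potential on a wedge, for `α ∈ I_ε` and `λ̃ = α + it`. -/
theorem helmholtz_denominator_lower_bounds (ε : ℝ) (hε : ε ∈ Set.Ioo (0:ℝ) 1) :
    ∃ c : ℝ, 0 < c ∧ ∀ θ : ℝ, θ ∈ Set.Ioo (0:ℝ) ((1 - ε) * π) →
      ∀ α : ℝ, 1 - (1 - ε) * π / θ ≤ α → α ≤ (1 - ε) * π / θ - 1 →
      ∀ t : ℝ, ∀ k : ℕ, 1 ≤ k →
      c * ((k : ℝ) * π / θ)^4 ≤
        (norm ((((α : ℂ) + t * Complex.I) - 2 * (α : ℂ) + 1)^2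
          - (((k : ℝ) * π / θ : ℝ) : ℂ)^2))^2 ∧
      c * (norm (((α : ℂ) + t * Complex.I) - 1))^4 ≤
        (norm ((((α : ℂ) + t * Complex.I) - 2 * (α : ℂ) + 1)^2
          - (((k : ℝ) * π / θ : ℝ) : ℂ)^2))^2 ∧
      c * (norm ((α : ℂ) + t * Complex.I))^4 ≤
        (norm ((((α : ℂ) + t * Complex.I) - 2 * (α : ℂ) + 1)^2
          - (((k : ℝ) * π / θ : ℝ) : ℂ)^2))^2 := by
  obtain ⟨hε₀, hε₁⟩ := hε
  refine ⟨ε ^ 4, by positivity, fun θ hθ α hα₁ hα₂ t k hk => ?_⟩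
  set b : ℝ := k * π / θ
  have hb : 0 ≤ b := div_nonneg (by positivity) hθ.1.le
  have hα : |α| + 1 ≤ (1 - ε) * b :=
    abs_add_one_le_mul_div_of_le_div_sub_one hε₁.le hθ.1 hk hα₁ hα₂
  have hαb : |α| + 1 ≤ b := hα.trans (by nlinarith)
  set z : ℂ := (α : ℂ) + t * I - 2 * (α : ℂ) + 1
  have hz : z.re = 1 - α ∧ z.im = t := ⟨by simp [z]; ring, by simp [z]⟩
  have hzre : |z.re| ≤ (1 - ε) * b := by
    rw [hz.1, abs_sub_comm]; linarith [abs_sub α 1, abs_one (α := ℝ)]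
  have squared : ∀ x : ℝ, ε ^ 2 * x ^ 2 ≤ ‖z ^ 2 - (b : ℂ) ^ 2‖ →
      ε ^ 4 * x ^ 4 ≤ ‖z ^ 2 - (b : ℂ) ^ 2‖ ^ 2 := fun x h =>
    calc ε ^ 4 * x ^ 4 = (ε ^ 2 * x ^ 2) ^ 2 := by ring
      _ ≤ _ := pow_le_pow_left₀ (by positivity) h 2
  refine ⟨squared b ?_, squared _ ?_, squared _ ?_⟩
  · linarith [sq_mul_sq_add_sq_im_le_norm_sq_sub_sq hε₀.le hb hzre, sq_nonneg z.im]
  · refine sq_mul_sq_norm_le_norm_sq_sub_sq hε₀.le hε₁.le hzre ?_ (by simp [hz.2])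
    simpa using (abs_sub α 1).trans (by simpa using hαb)
  · refine sq_mul_sq_norm_le_norm_sq_sub_sq hε₀.le hε₁.le hzre ?_ (by simp [hz.2])
    simpa using (le_add_of_nonneg_right zero_le_one).trans hαb
end

section
/- For every ε ∈ (0,1) there exists a constant c > 0, depending only on ε, such that the following holds. Let θ > 0, let α ∈ ℝ with 1 − (1−ε)π/θ ≤ α ≤ (1−ε)π/θ − 1, let t ∈ ℝ, let k ≥ 1 be an integer, and set λ = α + i t. Then |λ² − (kπ/θ)² − 1|² ≥ c·|λ|⁴ and |λ² − (kπ/θ)² − 1|² ≥ c·(kπ/θ)⁴. -/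
open Real

/-!
Put `μ = kπ/θ`. Since `k ≥ 1`, the hypothesis on `α` gives `|α| ≤ (1 - ε) μ`, hence
`α² ≤ (1 - ε) μ²` and `μ² - α² ≥ ε μ² ≥ ε α²`. Writing `λ = α + it`, the real part of
`λ² - μ² - 1` is `-(t² + μ² + 1 - α²)`, whose modulus dominates both `ε |λ|²` and `ε μ²`.
-/

namespace Complex

theorem norm_add_mul_I_pow_four (α t : ℝ) : ‖(α : ℂ) + t * I‖ ^ 4 = (α ^ 2 + t ^ 2) ^ 2 := by
  rw [show (4 : ℕ) = 2 * 2 from rfl, pow_mul, Complex.sq_norm, normSq_add_mul_I]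

theorem norm_sq_add_mul_I_sq_sub_sq_sub_one (α t μ : ℝ) :
    ‖((α : ℂ) + t * I) ^ 2 - (μ : ℂ) ^ 2 - 1‖ ^ 2 =
      (t ^ 2 + (μ ^ 2 + 1 - α ^ 2)) ^ 2 + (2 * α * t) ^ 2 := by
  rw [Complex.sq_norm, normSq_apply]
  simp only [sub_re, sub_im, pow_two, mul_re, mul_im, add_re, add_im, ofReal_re, ofReal_im,
    I_re, I_im, one_re, one_im]
  ring

end Complex

theorem sq_le_sq_add_sq_of_le {a x : ℝ} (ha : 0 ≤ a) (hax : a ≤ x) (y : ℝ) :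
    a ^ 2 ≤ x ^ 2 + y ^ 2 :=
  (pow_le_pow_left₀ ha hax 2).trans (le_add_of_nonneg_right (sq_nonneg y))

section Wedge

variable {ε α μ : ℝ}

theorem sq_le_one_sub_mul_sq (hε0 : 0 ≤ ε) (hε1 : ε ≤ 1) (hα : |α| ≤ (1 - ε) * μ) :
    α ^ 2 ≤ (1 - ε) * μ ^ 2 := by
  have hsq : α ^ 2 ≤ ((1 - ε) * μ) ^ 2 := sq_le_sq' (abs_le.mp hα).1 (abs_le.mp hα).2
  nlinarith [mul_nonneg (mul_nonneg hε0 (sub_nonneg.2 hε1)) (sq_nonneg μ)]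

theorem mul_normSq_le_denominator (hε0 : 0 ≤ ε) (hε1 : ε ≤ 1) (hα : |α| ≤ (1 - ε) * μ)
    (t : ℝ) : ε * (α ^ 2 + t ^ 2) ≤ t ^ 2 + (μ ^ 2 + 1 - α ^ 2) := by
  have hα' := sq_le_one_sub_mul_sq hε0 hε1 hα
  have hεα := mul_le_mul_of_nonneg_left hα' hε0
  have hεt : ε * t ^ 2 ≤ t ^ 2 := mul_le_of_le_one_left (sq_nonneg t) hε1
  nlinarith [mul_nonneg (mul_nonneg hε0 hε0) (sq_nonneg μ)]

theorem mul_sq_le_denominator (hε0 : 0 ≤ ε) (hε1 : ε ≤ 1) (hα : |α| ≤ (1 - ε) * μ)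
    (t : ℝ) : ε * μ ^ 2 ≤ t ^ 2 + (μ ^ 2 + 1 - α ^ 2) := by
  nlinarith [sq_le_one_sub_mul_sq hε0 hε1 hα, sq_nonneg t]

theorem abs_le_one_sub_mul_of_mem_wedge_interval {θ : ℝ} (hθ : 0 < θ) (hε1 : ε ≤ 1)
    {k : ℕ} (hk : 1 ≤ k) (hα₁ : 1 - (1 - ε) * π / θ ≤ α) (hα₂ : α ≤ (1 - ε) * π / θ - 1) :
    |α| ≤ (1 - ε) * ((k : ℝ) * π / θ) := by
  have hπθ : (1 - ε) * π / θ ≤ (1 - ε) * ((k : ℝ) * π / θ) := by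
    rw [mul_div_assoc, mul_div_assoc]
    gcongr
    exact le_mul_of_one_le_left (by positivity) (by exact_mod_cast hk)
  rw [abs_le]
  constructor <;> linarith

end Wedge

/-- Lower bounds on the denominators `λ² − (kπ/θ)² − 1` in the Fourier–Mellin representation
of the solution of the free-slip Stokes system on a wedge, for `α ∈ I_ε` and `λ = α + it`. -/
theorem stokes_denominator_lower_bounds (ε : ℝ) (hε : ε ∈ Set.Ioo (0:ℝ) 1) :
    ∃ c : ℝ, 0 < c ∧ ∀ θ : ℝ, 0 < θ →
      ∀ α : ℝ, 1 - (1 - ε) * π / θ ≤ α → α ≤ (1 - ε) * π / θ - 1 →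
      ∀ t : ℝ, ∀ k : ℕ, 1 ≤ k →
      c * ‖(α : ℂ) + t * Complex.I‖^4 ≤
        ‖((α : ℂ) + t * Complex.I)^2
          - (((k : ℝ) * π / θ : ℝ) : ℂ)^2 - 1‖^2 ∧
      c * ((k : ℝ) * π / θ)^4 ≤
        ‖((α : ℂ) + t * Complex.I)^2
          - (((k : ℝ) * π / θ : ℝ) : ℂ)^2 - 1‖^2 := by
  obtain ⟨hε0, hε1⟩ := hε
  refine ⟨ε ^ 2, by positivity, fun θ hθ α hα₁ hα₂ t k hk => ?_⟩
  have hα := abs_le_one_sub_mul_of_mem_wedge_interval hθ hε1.le hk hα₁ hα₂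
  rw [Complex.norm_sq_add_mul_I_sq_sub_sq_sub_one, Complex.norm_add_mul_I_pow_four]
  constructor
  · rw [← mul_pow]
    exact sq_le_sq_add_sq_of_le (by positivity) (mul_normSq_le_denominator hε0.le hε1.le hα t) _
  · rw [show (4 : ℕ) = 2 * 2 from rfl, pow_mul, ← mul_pow]
    exact sq_le_sq_add_sq_of_le (by positivity) (mul_sq_le_denominator hε0.le hε1.le hα t) _
end

section
/- There exists a universal constant C > 0 such that for all θ > 0, all λ ∈ ℂ, and all continuously differentiable functions v_r, v_φ : [0,θ] → ℂ satisfying v_φ'(φ) = −(λ+1)·v_r(φ) for all φ ∈ [0,θ], one has, for each ϑ ∈ {0,θ}: |v_φ(ϑ)|² ≤ C·(θ^{−1} + |λ+1|)·∫₀^θ (|v_r(φ)|² + |v_φ(φ)|²) dφ. -/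
open MeasureTheory Set

/-!
Write `g = ‖v_φ‖²`. By the fundamental theorem of calculus, `g(ϑ) ≤ g(φ) + ∫₀^θ |g'|` for every
`φ ∈ [0, θ]`; averaging over `φ` bounds `g(ϑ)` by the mean of `g` plus the total variation
`∫₀^θ |g'|`. The divergence-free condition gives `|g'| = 2|⟨v_φ, v_φ'⟩| ≤ 2|λ+1| |v_φ| |v_r|
≤ |λ+1| (|v_r|² + |v_φ|²)`, so the estimate holds with `C = 1`.
-/

section TraceInequality

variable {g g' : ℝ → ℝ} {a b : ℝ}

theorem sub_le_integral_abs_deriv (hab : a ≤ b) (hg : ∀ x ∈ Icc a b, HasDerivAt g (g' x) x)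
    (hg' : IntervalIntegrable g' volume a b) {s t : ℝ} (hs : s ∈ Icc a b) (ht : t ∈ Icc a b) :
    g t - g s ≤ ∫ x in a..b, |g' x| := by
  have hst : uIcc s t ⊆ uIcc a b := uIcc_subset_uIcc (Icc_subset_uIcc hs) (Icc_subset_uIcc ht)
  have hsub : uIoc s t ⊆ Ioc a b := by
    rw [uIoc]
    exact Ioc_subset_Ioc (le_min hs.1 ht.1) (max_le hs.2 ht.2)
  have hftc : ∫ x in s..t, g' x = g t - g s :=
    intervalIntegral.integral_eq_sub_of_hasDerivAt
      (fun x hx => hg x (uIcc_of_le hab ▸ hst hx)) (hg'.mono_set hst)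
  calc g t - g s ≤ |∫ x in s..t, g' x| := hftc ▸ le_abs_self _
    _ ≤ ∫ x in uIoc s t, |g' x| := by
      simpa using intervalIntegral.norm_integral_le_integral_norm_uIoc (f := g') (a := s) (b := t)
    _ ≤ ∫ x in Ioc a b, |g' x| :=
      setIntegral_mono_set ((intervalIntegrable_iff_integrableOn_Ioc_of_le hab).1 hg'.abs)
        (Filter.Eventually.of_forall fun _ => abs_nonneg _) hsub.eventuallyLE
    _ = ∫ x in a..b, |g' x| := (intervalIntegral.integral_of_le hab).symm

theorem le_inv_mul_integral_add_integral_abs_deriv (hab : a < b)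
    (hg : ∀ x ∈ Icc a b, HasDerivAt g (g' x) x) (hg' : IntervalIntegrable g' volume a b)
    {t : ℝ} (ht : t ∈ Icc a b) :
    g t ≤ (b - a)⁻¹ * (∫ x in a..b, g x) + ∫ x in a..b, |g' x| := by
  set V := ∫ x in a..b, |g' x|
  have hgi : IntervalIntegrable g volume a b :=
    ContinuousOn.intervalIntegrable fun x hx =>
      (hg x (uIcc_of_le hab.le ▸ hx)).continuousAt.continuousWithinAt
  have hint : ∫ _ in a..b, g t ≤ ∫ x in a..b, (g x + V) :=
    intervalIntegral.integral_mono_on hab.le intervalIntegrable_const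
      (hgi.add intervalIntegrable_const) fun s hs => by
        linarith [sub_le_integral_abs_deriv hab.le hg hg' hs ht]
  rw [intervalIntegral.integral_const, intervalIntegral.integral_add hgi intervalIntegrable_const,
    intervalIntegral.integral_const, smul_eq_mul, smul_eq_mul] at hint
  have hba : 0 < b - a := sub_pos.2 hab
  rw [← mul_le_mul_iff_right₀ hba]
  calc (b - a) * g t ≤ (∫ x in a..b, g x) + (b - a) * V := hint
    _ = (b - a) * ((b - a)⁻¹ * (∫ x in a..b, g x) + V) := by field_simp

end TraceInequality

theorem abs_two_mul_inner_le_mul_add_sq {E : Type*} [NormedAddCommGroup E]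
    [InnerProductSpace ℝ E] {u v w : E} {c : ℝ} (hc : 0 ≤ c) (hv : ‖v‖ ≤ c * ‖w‖) :
    |2 * inner ℝ u v| ≤ c * (‖w‖ ^ 2 + ‖u‖ ^ 2) := by
  rw [abs_mul, abs_two]
  calc 2 * |inner ℝ u v| ≤ 2 * (‖u‖ * (c * ‖w‖)) := by
        gcongr
        exact (abs_real_inner_le_norm u v).trans (by gcongr)
    _ = c * (2 * ‖w‖ * ‖u‖) := by ring
    _ ≤ c * (‖w‖ ^ 2 + ‖u‖ ^ 2) := by gcongr; exact two_mul_le_add_sq _ _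

/-- Trace-type estimate for the Mellin transform of a divergence-free vector field on a
wedge of opening angle `θ`: if `v_φ' = −(λ+1)v_r` on `[0,θ]`, then the boundary values of
`v_φ` are controlled by `(θ⁻¹ + |λ+1|)` times the `L²` norm of `(v_r, v_φ)`. -/
theorem mellin_trace_estimate :
    ∃ C : ℝ, 0 < C ∧ ∀ θ : ℝ, 0 < θ → ∀ lam : ℂ, ∀ vr vφ : ℝ → ℂ,
      ContDiff ℝ 1 vr → ContDiff ℝ 1 vφ →
      (∀ φ ∈ Set.Icc (0:ℝ) θ, deriv vφ φ = -(lam + 1) * vr φ) →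
      ∀ ϑ ∈ ({0, θ} : Set ℝ),
        ‖vφ ϑ‖^2 ≤
          C * (θ⁻¹ + ‖lam + 1‖) *
            ∫ φ in (0:ℝ)..θ, (‖vr φ‖^2 + ‖vφ φ‖^2) := by
  refine ⟨1, one_pos, fun θ hθ lam vr vφ hvr hvφ hdiv ϑ hϑ => ?_⟩
  have hϑ' : ϑ ∈ Icc 0 θ := by
    rcases hϑ with rfl | rfl
    exacts [left_mem_Icc.2 hθ.le, right_mem_Icc.2 hθ.le]
  have hg : Continuous fun φ => ‖vφ φ‖ ^ 2 := by fun_prop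
  have hF : Continuous fun φ => ‖vr φ‖ ^ 2 + ‖vφ φ‖ ^ 2 := by fun_prop
  have hg' : Continuous fun φ => 2 * inner ℝ (vφ φ) (deriv vφ φ) :=
    continuous_const.mul (hvφ.continuous.inner (hvφ.continuous_deriv le_rfl))
  have htrace := le_inv_mul_integral_add_integral_abs_deriv hθ
    (fun x _ => (hvφ.differentiable one_ne_zero x).hasDerivAt.norm_sq)
    (hg'.intervalIntegrable 0 θ) hϑ'
  have hmean : ∫ φ in (0:ℝ)..θ, ‖vφ φ‖ ^ 2 ≤ ∫ φ in (0:ℝ)..θ, (‖vr φ‖ ^ 2 + ‖vφ φ‖ ^ 2) :=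
    intervalIntegral.integral_mono_on hθ.le (hg.intervalIntegrable _ _) (hF.intervalIntegrable _ _)
      fun φ _ => le_add_of_nonneg_left (sq_nonneg _)
  have hvar : ∫ φ in (0:ℝ)..θ, |2 * inner ℝ (vφ φ) (deriv vφ φ)| ≤
      ‖lam + 1‖ * ∫ φ in (0:ℝ)..θ, (‖vr φ‖ ^ 2 + ‖vφ φ‖ ^ 2) := by
    rw [← intervalIntegral.integral_const_mul]
    refine intervalIntegral.integral_mono_on hθ.le (hg'.abs.intervalIntegrable _ _)
      ((continuous_const.mul hF).intervalIntegrable _ _) fun φ hφ => ?_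
    refine abs_two_mul_inner_le_mul_add_sq (norm_nonneg _) ?_
    rw [hdiv φ hφ, norm_mul, norm_neg]
  calc ‖vφ ϑ‖ ^ 2
      ≤ (θ - 0)⁻¹ * (∫ φ in (0:ℝ)..θ, ‖vφ φ‖ ^ 2) +
          ∫ φ in (0:ℝ)..θ, |2 * inner ℝ (vφ φ) (deriv vφ φ)| := htrace
    _ ≤ θ⁻¹ * (∫ φ in (0:ℝ)..θ, (‖vr φ‖ ^ 2 + ‖vφ φ‖ ^ 2)) +
          ‖lam + 1‖ * ∫ φ in (0:ℝ)..θ, (‖vr φ‖ ^ 2 + ‖vφ φ‖ ^ 2) := by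
      rw [sub_zero]; gcongr
    _ = 1 * (θ⁻¹ + ‖lam + 1‖) * ∫ φ in (0:ℝ)..θ, (‖vr φ‖ ^ 2 + ‖vφ φ‖ ^ 2) := by ring
end

section
/- Let D := ⋃_{k∈ℤ} (kπ − π/4, kπ + π/4). There exists a universal constant C > 0 such that for all θ > 0, all α, t ∈ ℝ and all ϑ ∈ [0,θ], writing λ = α + i t, the following holds: if either αθ ∈ ℝ \ D, or (αθ ∈ D and |t|·θ ≥ 1/4), then sin(λθ) ≠ 0 and |cos(λϑ)|² / |sin(λθ)|² ≤ C·e^{−2|t|(θ−ϑ)}. -/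
open Real Set

/-!
Since `‖sin (a + ib)‖² = sin² a + sinh² b` and `‖cos (a + ib)‖² = cos² a + sinh² b`,
the numerator is at most `cosh² (tϑ) ≤ e^{2|t|ϑ}`. The denominator is at least `e^{2|t|θ}/36`:
off `D` the point `αθ` is at distance `≥ π/4` from `πℤ`, so `sin² (αθ) ≥ 1/2` and
`1/2 + sinh² u = cosh² u - 1/2 ≥ cosh² u / 2`; on `D` we have `|t|θ ≥ 1/4`, which makes
`e^{-|t|θ}` small enough that `sinh (|t|θ) ≥ e^{|t|θ}/6`.
-/

theorem Complex.sq_norm_sin_add_mul_I (a b : ℝ) :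
    ‖sin (a + b * I)‖ ^ 2 = Real.sin a ^ 2 + Real.sinh b ^ 2 := by
  rw [Complex.sq_norm, normSq_apply, sin_add, sin_mul_I, cos_mul_I, ← ofReal_sin, ← ofReal_cos,
    ← ofReal_sinh, ← ofReal_cosh]
  simp only [add_re, add_im, mul_re, mul_im, ofReal_re, ofReal_im, I_re, I_im]
  nlinarith [Real.sin_sq_add_cos_sq a, Real.cosh_sq b]

theorem Complex.sq_norm_cos_add_mul_I (a b : ℝ) :
    ‖cos (a + b * I)‖ ^ 2 = Real.cos a ^ 2 + Real.sinh b ^ 2 := by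
  rw [Complex.sq_norm, normSq_apply, cos_add, sin_mul_I, cos_mul_I, ← ofReal_sin, ← ofReal_cos,
    ← ofReal_sinh, ← ofReal_cosh]
  simp only [sub_re, sub_im, mul_re, mul_im, ofReal_re, ofReal_im, I_re, I_im]
  nlinarith [Real.sin_sq_add_cos_sq a, Real.cosh_sq b]

namespace Real

theorem exp_le_two_mul_cosh (x : ℝ) : exp x ≤ 2 * cosh x := by
  rw [cosh_eq]; linarith [exp_pos (-x)]

theorem cosh_le_exp_abs (x : ℝ) : cosh x ≤ exp |x| := by
  rw [← cosh_abs, cosh_eq]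
  linarith [exp_le_exp.mpr (show -|x| ≤ |x| by linarith [abs_nonneg x])]

theorem exp_div_six_le_sinh {x : ℝ} (hx : 1 / 4 ≤ x) : exp x / 6 ≤ sinh x := by
  have h : 3 / 2 ≤ exp (2 * x) := by linarith [add_one_le_exp (2 * x)]
  have h' : exp (-x) * exp (2 * x) = exp x := by rw [← exp_add]; ring_nf
  rw [sinh_eq]
  nlinarith [exp_pos (-x)]

theorem half_le_sin_sq_of_notMem {x : ℝ}
    (hx : x ∉ ⋃ k : ℤ, Ioo ((k : ℝ) * π - π / 4) ((k : ℝ) * π + π / 4)) :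
    1 / 2 ≤ sin x ^ 2 := by
  set k := round (x / π)
  set y := x - k * π with hy
  have hy_le : |y| ≤ π / 2 := by
    have hy' : y = (x / π - k) * π := by rw [hy]; field_simp
    rw [hy', abs_mul, abs_of_pos pi_pos]
    nlinarith [abs_sub_round (x / π), pi_pos]
  have hy_ge : π / 4 ≤ |y| := by
    simp only [mem_iUnion, mem_Ioo, not_exists, not_and_or, not_lt] at hx
    rcases hx k with h | h
    · rw [abs_of_nonpos (by linarith [pi_pos])]; linarith
    · rw [abs_of_nonneg (by linarith [pi_pos])]; linarith
  have hcos : cos (2 * x) = cos |2 * y| := by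
    rw [cos_abs, show 2 * x = 2 * y + k * (2 * π) by ring, cos_add_int_mul_two_pi]
  have : cos (2 * x) ≤ 0 := by
    rw [hcos]; apply cos_nonpos_of_pi_div_two_le_of_le <;> rw [abs_mul, abs_two] <;> linarith
  rw [sin_sq_eq_half_sub]; linarith

theorem cos_sq_add_sinh_sq_le_exp_abs_sq (a b : ℝ) : cos a ^ 2 + sinh b ^ 2 ≤ exp |b| ^ 2 := by
  have : cosh b ^ 2 ≤ exp |b| ^ 2 := pow_le_pow_left₀ (cosh_pos b).le (cosh_le_exp_abs b) 2
  linarith [cos_sq_le_one a, cosh_sq b]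

theorem exp_abs_sq_div_le_sin_sq_add_sinh_sq {a u : ℝ} (h : 1 / 2 ≤ sin a ^ 2 ∨ 1 / 4 ≤ |u|) :
    exp |u| ^ 2 / 36 ≤ sin a ^ 2 + sinh u ^ 2 := by
  rw [← sq_abs (sinh u), abs_sinh]
  rcases h with ha | hu
  · have h2 : exp |u| ^ 2 ≤ (2 * cosh |u|) ^ 2 :=
      pow_le_pow_left₀ (exp_pos _).le (exp_le_two_mul_cosh _) 2
    nlinarith [cosh_sq |u|, sq_nonneg (sinh |u|)]
  · have h6 : (exp |u| / 6) ^ 2 ≤ sinh |u| ^ 2 :=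
      pow_le_pow_left₀ (by positivity) (exp_div_six_le_sinh hu) 2
    nlinarith [sq_nonneg (sin a)]

end Real

/-- Exponential decay estimate for the quotient `|cos(λϑ)|²/|sin(λθ)|²` with `λ = α + it`,
uniformly in the opening angle `θ`, where `D` is the set of reals at distance less than
`π/4` from `πℤ`. -/
theorem cos_sin_quotient_decay :
    ∃ C : ℝ, 0 < C ∧ ∀ θ : ℝ, 0 < θ → ∀ α t ϑ : ℝ, ϑ ∈ Icc (0:ℝ) θ →
      (α * θ ∉ (⋃ k : ℤ, Ioo ((k : ℝ) * π - π/4) ((k : ℝ) * π + π/4)) ∨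
        (α * θ ∈ (⋃ k : ℤ, Ioo ((k : ℝ) * π - π/4) ((k : ℝ) * π + π/4)) ∧
          1/4 ≤ |t| * θ)) →
      Complex.sin (((α : ℂ) + t * Complex.I) * θ) ≠ 0 ∧
      (‖Complex.cos (((α : ℂ) + t * Complex.I) * (ϑ : ℂ))‖)^2 /
          (‖Complex.sin (((α : ℂ) + t * Complex.I) * (θ : ℂ))‖)^2
        ≤ C * Real.exp (-2 * |t| * (θ - ϑ)) := by
  refine ⟨36, by norm_num, fun θ hθ α t ϑ ⟨hϑ, _⟩ hD => ?_⟩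
  have hsplit (s : ℝ) :
      ((α : ℂ) + t * Complex.I) * s = ((α * s : ℝ) : ℂ) + ((t * s : ℝ) : ℂ) * Complex.I := by
    push_cast; ring
  have hsin := Complex.sq_norm_sin_add_mul_I (α * θ) (t * θ)
  have hcos := Complex.sq_norm_cos_add_mul_I (α * ϑ) (t * ϑ)
  rw [← hsplit] at hsin hcos
  have hden : exp (|t| * θ) ^ 2 / 36 ≤ sin (α * θ) ^ 2 + sinh (t * θ) ^ 2 := by
    have hD' : 1 / 2 ≤ sin (α * θ) ^ 2 ∨ 1 / 4 ≤ |t * θ| := by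
      rw [abs_mul, abs_of_pos hθ]
      exact hD.imp half_le_sin_sq_of_notMem And.right
    simpa only [abs_mul, abs_of_pos hθ] using exp_abs_sq_div_le_sin_sq_add_sinh_sq hD'
  have hnum : cos (α * ϑ) ^ 2 + sinh (t * ϑ) ^ 2 ≤ exp (|t| * ϑ) ^ 2 := by
    simpa only [abs_mul, abs_of_nonneg hϑ] using cos_sq_add_sinh_sq_le_exp_abs_sq (α * ϑ) (t * ϑ)
  have hpos : 0 < ‖Complex.sin ((α + t * Complex.I) * θ)‖ ^ 2 :=
    hsin ▸ (by positivity : (0 : ℝ) < _).trans_le hden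
  refine ⟨fun h => by simp [h] at hpos, ?_⟩
  calc _ ≤ exp (|t| * ϑ) ^ 2 / (exp (|t| * θ) ^ 2 / 36) := by
        rw [hsin, hcos]; exact div_le_div₀ (by positivity) hnum (by positivity) hden
    _ = 36 * exp (-2 * |t| * (θ - ϑ)) := by
        rw [← exp_nat_mul, ← exp_nat_mul, div_div_eq_mul_div, mul_div_right_comm, ← exp_sub,
          mul_comm]
        congr 2; push_cast; ring
end

section
/- For every ε ∈ (0,1) there exists a constant C > 0, depending only on ε, such that for all θ ∈ (0,π), all λ = α + i t ∈ ℂ with 1 − (1−ε)π/θ ≤ α ≤ (1−ε)π/θ − 1 and |t|·θ ≥ 1, and all φ ∈ [0,θ], the quantities λ sin((λ+1)θ) and λ sin((λ−1)θ) are nonzero and |sin((λ+1)φ)/(4λ sin((λ+1)θ)) − sin((λ−1)φ)/(4λ sin((λ−1)θ))| ≤ (C/|λ|)·( e^{−|t|(θ+φ)}·|sin(θ+φ)| + e^{−|t|(θ−φ)}·|sin(θ−φ)| ). -/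
open Real

/-!
Combining the two fractions over the common denominator `4λ sin((λ+1)θ) sin((λ-1)θ)` turns the
numerator, by the addition formulas, into `sin(λ(θ-φ)) sin(θ+φ) - sin(λ(θ+φ)) sin(θ-φ)`. Writing
`t = Im λ`, each `sin(λx)` with `x ≥ 0` is at most `e^{|t|x}`, while `|sin z| ≥ sinh |Im z|`
bounds both denominator factors below by a multiple of `e^{|t|θ}` as soon as `|t|θ ≥ 1`.
Dividing by `e^{2|t|θ}` gives the exponents `-|t|(θ±φ)`.
-/

lemma Real.one_sub_exp_mul_exp_le_two_mul_sinh {c y : ℝ} (h : c ≤ y) :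
    (1 - exp (-2 * c)) * exp y ≤ 2 * sinh y := by
  have : exp (-y) ≤ exp (-2 * c) * exp y := by
    rw [← exp_add]
    exact exp_le_exp.2 (by linarith)
  rw [sinh_eq]
  linarith

namespace Complex

lemma norm_exp_neg_mul_I (z : ℂ) : ‖exp (-z * I)‖ = Real.exp z.im := by
  simp [norm_exp]

lemma norm_exp_mul_I (z : ℂ) : ‖exp (z * I)‖ = Real.exp (-z.im) := by
  simp [norm_exp]

lemma norm_sin_le_exp_abs_im (z : ℂ) : ‖sin z‖ ≤ Real.exp |z.im| := by
  have htri := norm_sub_le (exp (-z * I)) (exp (z * I))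
  rw [norm_exp_neg_mul_I, norm_exp_mul_I] at htri
  have h₁ : Real.exp z.im ≤ Real.exp |z.im| := Real.exp_le_exp.2 (le_abs_self _)
  have h₂ : Real.exp (-z.im) ≤ Real.exp |z.im| := Real.exp_le_exp.2 (neg_le_abs _)
  rw [sin, norm_div, norm_mul, norm_I, mul_one, Complex.norm_two]
  linarith

lemma sinh_abs_im_le_norm_sin (z : ℂ) : Real.sinh |z.im| ≤ ‖sin z‖ := by
  have htri := abs_norm_sub_norm_le (exp (-z * I)) (exp (z * I))
  rw [norm_exp_neg_mul_I, norm_exp_mul_I] at htri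
  rw [← Real.abs_sinh, Real.sinh_eq, abs_div, abs_two, sin, norm_div, norm_mul, norm_I, mul_one,
    Complex.norm_two]
  gcongr

lemma sin_ne_zero_of_im_ne_zero {z : ℂ} (hz : z.im ≠ 0) : sin z ≠ 0 := by
  rw [← norm_pos_iff]
  exact (Real.sinh_pos_iff.2 (abs_pos.2 hz)).trans_le (sinh_abs_im_le_norm_sin z)

lemma norm_sin_mul_ofReal_le (w : ℂ) {x : ℝ} (hx : 0 ≤ x) :
    ‖sin (w * x)‖ ≤ Real.exp (|w.im| * x) := by
  refine (norm_sin_le_exp_abs_im _).trans (Real.exp_le_exp.2 ?_)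
  rw [mul_im, ofReal_re, ofReal_im, mul_zero, zero_add, abs_mul, abs_of_nonneg hx]

lemma norm_sin_ofReal (x : ℝ) : ‖sin (x : ℂ)‖ = |Real.sin x| := by
  rw [← ofReal_sin, norm_real, Real.norm_eq_abs]

lemma sin_add_one_mul_mul_sin_sub_one_mul_sub (w x y : ℂ) :
    sin ((w + 1) * y) * sin ((w - 1) * x) - sin ((w - 1) * y) * sin ((w + 1) * x) =
      sin (w * (x - y)) * sin (x + y) - sin (w * (x + y)) * sin (x - y) := by
  simp only [add_mul, sub_mul, mul_add, mul_sub, one_mul, sin_add, sin_sub]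
  ring

lemma one_sub_exp_mul_exp_le_two_mul_norm_sin {c : ℝ} {z : ℂ} (h : c ≤ |z.im|) :
    (1 - Real.exp (-2 * c)) * Real.exp |z.im| ≤ 2 * ‖sin z‖ :=
  (Real.one_sub_exp_mul_exp_le_two_mul_sinh h).trans
    (mul_le_mul_of_nonneg_left (sinh_abs_im_le_norm_sin z) zero_le_two)

end Complex

/-- The boundary derivative `∂_{φ'}G(λ, φ, θ)` of the Green's function of
`∂_φ⁴ + 2(λ² + 1)∂_φ² + (λ² - 1)²` on `(0, θ)` with `G = ∂_φ²G = 0` at both ends. -/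
noncomputable def greenBoundaryDeriv (lam : ℂ) (θ φ : ℝ) : ℂ :=
  (Complex.sin (lam * ↑(θ - φ)) * Complex.sin ↑(θ + φ) -
      Complex.sin (lam * ↑(θ + φ)) * Complex.sin ↑(θ - φ)) /
    (4 * lam * Complex.sin ((lam + 1) * θ) * Complex.sin ((lam - 1) * θ))

open Complex in
lemma sub_div_eq_greenBoundaryDeriv {lam : ℂ} {θ : ℝ} (hlam : lam ≠ 0)
    (hplus : sin ((lam + 1) * θ) ≠ 0) (hminus : sin ((lam - 1) * θ) ≠ 0) (φ : ℝ) :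
    sin ((lam + 1) * φ) / (4 * lam * sin ((lam + 1) * θ)) -
        sin ((lam - 1) * φ) / (4 * lam * sin ((lam - 1) * θ)) =
      greenBoundaryDeriv lam θ φ := by
  rw [greenBoundaryDeriv, ofReal_sub, ofReal_add,
    ← sin_add_one_mul_mul_sin_sub_one_mul_sub lam θ φ, div_sub_div _ _ (by simp [hlam, hplus])
    (by simp [hlam, hminus]), div_eq_div_iff (by simp [hlam, hplus, hminus])
    (by simp [hlam, hplus, hminus])]
  ring

lemma norm_greenBoundaryDeriv_numerator_le (lam : ℂ) {θ φ : ℝ} (hφ₀ : 0 ≤ φ) (hφθ : φ ≤ θ) :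
    ‖Complex.sin (lam * ↑(θ - φ)) * Complex.sin ↑(θ + φ) -
        Complex.sin (lam * ↑(θ + φ)) * Complex.sin ↑(θ - φ)‖ ≤
      Real.exp (|lam.im| * (θ - φ)) * |Real.sin (θ + φ)| +
        Real.exp (|lam.im| * (θ + φ)) * |Real.sin (θ - φ)| := by
  refine (norm_sub_le _ _).trans ?_
  rw [norm_mul, norm_mul, Complex.norm_sin_ofReal, Complex.norm_sin_ofReal]
  gcongr <;> exact Complex.norm_sin_mul_ofReal_le lam (by linarith)

lemma norm_greenBoundaryDeriv_le {lam : ℂ} {θ φ : ℝ} (hθ : 0 < θ) (ht : 1 ≤ |lam.im| * θ)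
    (hφ₀ : 0 ≤ φ) (hφθ : φ ≤ θ) :
    ‖greenBoundaryDeriv lam θ φ‖ ≤ ((1 - Real.exp (-2))⁻¹ ^ 2 / ‖lam‖) *
      (Real.exp (-|lam.im| * (θ + φ)) * |Real.sin (θ + φ)| +
        Real.exp (-|lam.im| * (θ - φ)) * |Real.sin (θ - φ)|) := by
  set t := |lam.im|
  set P := Real.exp (t * θ)
  have hP : 0 < P := Real.exp_pos _
  have hu : 0 < 1 - Real.exp (-2) := sub_pos.2 (Real.exp_lt_one_iff.2 (by norm_num))
  have hlam : 0 < ‖lam‖ := by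
    refine lt_of_lt_of_le ?_ (Complex.abs_im_le_norm lam)
    nlinarith [abs_nonneg lam.im]
  have hfactor : ∀ z : ℂ, z.im = lam.im * θ → (1 - Real.exp (-2)) * P ≤ 2 * ‖Complex.sin z‖ := by
    intro z hz
    have hzt : |z.im| = t * θ := by rw [hz, abs_mul, abs_of_pos hθ]
    have := Complex.one_sub_exp_mul_exp_le_two_mul_norm_sin (c := 1) (hzt ▸ ht)
    rwa [hzt, mul_one] at this
  have hplus := hfactor ((lam + 1) * θ) (by simp)
  have hminus := hfactor ((lam - 1) * θ) (by simp)
  have hnum := norm_greenBoundaryDeriv_numerator_le lam hφ₀ hφθ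
  have hexp : ∀ x y : ℝ, x + y = 2 * θ → Real.exp (t * x) = P ^ 2 * Real.exp (-t * y) := by
    intro x y hxy
    rw [← Real.exp_nat_mul, ← Real.exp_add, show x = 2 * θ - y by linarith]
    ring_nf
  have hden := mul_le_mul hplus hminus (by positivity) (by positivity)
  rw [greenBoundaryDeriv, norm_div, norm_mul, norm_mul, norm_mul, Complex.norm_ofNat]
  calc _ ≤ P ^ 2 * (Real.exp (-t * (θ + φ)) * |Real.sin (θ + φ)| +
          Real.exp (-t * (θ - φ)) * |Real.sin (θ - φ)|) /
          (‖lam‖ * ((1 - Real.exp (-2)) * P) ^ 2) := by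
        refine div_le_div₀ (by positivity) (hnum.trans_eq ?_) (by positivity)
          (by nlinarith [norm_nonneg lam])
        rw [hexp (θ - φ) (θ + φ) (by ring), hexp (θ + φ) (θ - φ) (by ring)]
        ring
    _ = _ := by field_simp

theorem green_boundary_pointwise_decay_general (ε : ℝ) :
    ∃ C : ℝ, 0 < C ∧ ∀ θ : ℝ, θ ∈ Set.Ioo (0:ℝ) π → ∀ lam : ℂ,
      1 - (1 - ε) * π / θ ≤ lam.re → lam.re ≤ (1 - ε) * π / θ - 1 →
      1 ≤ |lam.im| * θ → ∀ φ ∈ Set.Icc (0:ℝ) θ,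
      lam * Complex.sin ((lam + 1) * θ) ≠ 0 ∧
      lam * Complex.sin ((lam - 1) * θ) ≠ 0 ∧
      ‖Complex.sin ((lam + 1) * (φ : ℂ)) / (4 * lam * Complex.sin ((lam + 1) * θ))
          - Complex.sin ((lam - 1) * (φ : ℂ)) / (4 * lam * Complex.sin ((lam - 1) * θ))‖
        ≤ (C / ‖lam‖) *
          (Real.exp (-|lam.im| * (θ + φ)) * |Real.sin (θ + φ)| +
           Real.exp (-|lam.im| * (θ - φ)) * |Real.sin (θ - φ)|) := by
  refine ⟨(1 - Real.exp (-2))⁻¹ ^ 2,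
    pow_pos (inv_pos.2 (sub_pos.2 (Real.exp_lt_one_iff.2 (by norm_num)))) 2, ?_⟩
  intro θ hθ lam _ _ ht φ hφ
  have him : lam.im ≠ 0 := by
    rintro h
    simp [h] at ht
    linarith
  have hlam : lam ≠ 0 := fun h ↦ him (by simp [h])
  have hplus : Complex.sin ((lam + 1) * θ) ≠ 0 :=
    Complex.sin_ne_zero_of_im_ne_zero (by simpa using ⟨him, hθ.1.ne'⟩)
  have hminus : Complex.sin ((lam - 1) * θ) ≠ 0 :=
    Complex.sin_ne_zero_of_im_ne_zero (by simpa using ⟨him, hθ.1.ne'⟩)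
  refine ⟨mul_ne_zero hlam hplus, mul_ne_zero hlam hminus, ?_⟩
  rw [sub_div_eq_greenBoundaryDeriv hlam hplus hminus]
  exact norm_greenBoundaryDeriv_le hθ.1 ht hφ.1 hφ.2

/-- Pointwise exponential decay bound for the boundary derivative `∂_{φ'}G(λ,φ,θ)` of the
fourth-order Green's function, for `Re λ ∈ I_ε` and `|Im λ|θ ≥ 1`. -/
theorem green_boundary_pointwise_decay (ε : ℝ) (hε : ε ∈ Set.Ioo (0:ℝ) 1) :
    ∃ C : ℝ, 0 < C ∧ ∀ θ : ℝ, θ ∈ Set.Ioo (0:ℝ) π → ∀ lam : ℂ,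
      1 - (1 - ε) * π / θ ≤ lam.re → lam.re ≤ (1 - ε) * π / θ - 1 →
      1 ≤ |lam.im| * θ → ∀ φ ∈ Set.Icc (0:ℝ) θ,
      lam * Complex.sin ((lam + 1) * θ) ≠ 0 ∧
      lam * Complex.sin ((lam - 1) * θ) ≠ 0 ∧
      ‖Complex.sin ((lam + 1) * (φ : ℂ)) / (4 * lam * Complex.sin ((lam + 1) * θ))
          - Complex.sin ((lam - 1) * (φ : ℂ)) / (4 * lam * Complex.sin ((lam - 1) * θ))‖
        ≤ (C / ‖lam‖) *
          (Real.exp (-|lam.im| * (θ + φ)) * |Real.sin (θ + φ)| +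
           Real.exp (-|lam.im| * (θ - φ)) * |Real.sin (θ - φ)|) :=
  green_boundary_pointwise_decay_general ε
end
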